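/- arXiv:1707.05734 — 7 statements merged into one kernel-verified Lean document; each statement's English description precedes it below -/
import Mathlib

section
/- BD(G) = ker(I − DG) and BD(D) = ker(I − GD). Explicitly: an element u of dom(G) belongs to BD(G) if and only if Gu ∈ dom(D) and DGu = u; and an element q of dom(D) belongs to BD(D) if and only if Dq ∈ dom(G) and GDq = q. -/
open Filter Topology

noncomputable section

namespace DtNPaper

local notation "⟪" x ", " y "⟫" => (inner ℂ x y : ℂ)

/-- Membership in the abstract boundary data space `BD(T)`: `u ∈ dom T`
(with `p = T u`, i.e. `(u, p)` in the graph of `T`) and `u` is orthogonal to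
`dom T̊` with respect to the graph inner product of `dom T`. -/
def memBD {E F : Type*} [NormedAddCommGroup E] [InnerProductSpace ℂ E]
    [NormedAddCommGroup F] [InnerProductSpace ℂ F]
    (T Ti : E →ₗ.[ℂ] F) (u : E) : Prop :=
  ∃ p : F, (u, p) ∈ T.graph ∧ ∀ v w, (v, w) ∈ Ti.graph → ⟪v, u⟫ + ⟪w, p⟫ = 0

/-- A bounded operator `M` is coercive if `Re (M x, x) ≥ μ ‖x‖²` for some `μ > 0`. -/
def Coercive {E : Type*} [NormedAddCommGroup E] [InnerProductSpace ℂ E]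
    (M : E →L[ℂ] E) : Prop :=
  ∃ μ : ℝ, 0 < μ ∧ ∀ x : E, μ * ‖x‖ ^ 2 ≤ (⟪x, M x⟫).re

/-- Sequential formulation of compactness of the inclusion of `dom T`
(graph norm) into `E`. -/
def CompactIncl {E F : Type*} [NormedAddCommGroup E] [InnerProductSpace ℂ E]
    [NormedAddCommGroup F] [InnerProductSpace ℂ F] (T : E →ₗ.[ℂ] F) : Prop :=
  ∀ (u : ℕ → E) (p : ℕ → F), (∀ n, (u n, p n) ∈ T.graph) →
    (∃ C : ℝ, ∀ n, ‖u n‖ ^ 2 + ‖p n‖ ^ 2 ≤ C) →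
    ∃ φ : ℕ → ℕ, StrictMono φ ∧ ∃ x : E, Tendsto (fun j => u (φ j)) atTop (𝓝 x)

/-- The range of a partially defined linear operator, as a set. -/
def ranSet {E F : Type*} [NormedAddCommGroup E] [InnerProductSpace ℂ E]
    [NormedAddCommGroup F] [InnerProductSpace ℂ F] (T : E →ₗ.[ℂ] F) : Set F :=
  {p | ∃ u, (u, p) ∈ T.graph}

/-- The Dirichlet-to-Neumann graph associated with `-D a G + m`:
the set of pairs `(π_{BD(G)} u, π_{BD(D)} (a G u))` where `u ∈ dom (D a G)` and
`m u - D a G u = 0`.  The orthogonal projections onto the boundary data spaces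
are characterised by membership in `BD` together with the difference lying in
the domain of the corresponding minimal operator. -/
def dtnGraph {E F : Type*} [NormedAddCommGroup E] [InnerProductSpace ℂ E]
    [NormedAddCommGroup F] [InnerProductSpace ℂ F]
    (G Gi : E →ₗ.[ℂ] F) (D Di : F →ₗ.[ℂ] E)
    (a : F →L[ℂ] F) (m : E →L[ℂ] E) : Set (E × F) :=
  {z | ∃ u p, (u, p) ∈ G.graph ∧ (a p, m u) ∈ D.graph ∧
    memBD G Gi z.1 ∧ u - z.1 ∈ Gi.domain ∧
    memBD D Di z.2 ∧ a p - z.2 ∈ Di.domain}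

/-- The Dirichlet-to-Neumann graph in `H`: `(φ, ψ)` belongs to it if there is
`u₀ ∈ BD(G)` with `κ u₀ = φ` and `Λ u₀ = G (κ* ψ)`; here `k` is `κ` and
`kstarG` is the map `ψ ↦ G (κ* ψ)`. -/
def dtnGraphH {E F HS : Type*} [NormedAddCommGroup E] [InnerProductSpace ℂ E]
    [NormedAddCommGroup F] [InnerProductSpace ℂ F]
    [NormedAddCommGroup HS] [InnerProductSpace ℂ HS]
    (G Gi : E →ₗ.[ℂ] F) (D Di : F →ₗ.[ℂ] E)
    (a : F →L[ℂ] F) (m : E →L[ℂ] E)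
    (k : E → HS) (kstarG : HS → F) : Set (HS × HS) :=
  {z | ∃ u₀ : E, memBD G Gi u₀ ∧ k u₀ = z.1 ∧
    (u₀, kstarG z.2) ∈ dtnGraph G Gi D Di a m}

variable {H₀ H₁ HS : Type*}
  [NormedAddCommGroup H₀] [InnerProductSpace ℂ H₀] [CompleteSpace H₀]
  [NormedAddCommGroup H₁] [InnerProductSpace ℂ H₁] [CompleteSpace H₁]

/-! For `(u, p)` in the graph of `G`, `u ∈ BD(G)` says that `(u, p)` is orthogonal to the graph
of `G̊ = -D*`, i.e. that `(p, u)` annihilates everything annihilating the graph of `D`. Since that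
graph is closed, the bipolar identity puts `(p, u)` in it. The converse is the defining identity
of `G̊`, and the statement for `D` is the same argument with the roles exchanged. -/

theorem mem_of_inner_add_inner_eq_zero {E F : Type*}
    [NormedAddCommGroup E] [InnerProductSpace ℂ E] [CompleteSpace E]
    [NormedAddCommGroup F] [InnerProductSpace ℂ F] [CompleteSpace F]
    (S : Submodule ℂ (E × F)) (hS : IsClosed (S : Set (E × F))) (x : E) (y : F)
    (h : ∀ v w, (∀ a b, (a, b) ∈ S → ⟪v, a⟫ + ⟪w, b⟫ = 0) → ⟪v, x⟫ + ⟪w, y⟫ = 0) :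
    (x, y) ∈ S := by
  -- `E × F` carries the sup norm; the bipolar identity `Sᗮᗮ = S` lives on its `L²` copy.
  set e := WithLp.prodContinuousLinearEquiv 2 ℂ E F
  set S₂ : Submodule ℂ (WithLp 2 (E × F)) := S.comap e.toLinearMap
  have : CompleteSpace S₂ := (hS.preimage e.continuous).completeSpace_coe
  have hperp : WithLp.toLp 2 (x, y) ∈ S₂ᗮᗮ := by
    refine (Submodule.mem_orthogonal _ _).2 fun z hz => ?_
    refine h (WithLp.ofLp z).1 (WithLp.ofLp z).2 fun a b hab => ?_
    simpa using (Submodule.mem_orthogonal' _ _).1 hz (WithLp.toLp 2 (a, b)) (by simpa [S₂, e])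
  rw [Submodule.orthogonal_orthogonal] at hperp
  simpa [S₂, e] using hperp

theorem memBD_iff_mem_graph {E F : Type*}
    [NormedAddCommGroup E] [InnerProductSpace ℂ E] [CompleteSpace E]
    [NormedAddCommGroup F] [InnerProductSpace ℂ F] [CompleteSpace F]
    (T Ti : E →ₗ.[ℂ] F) (S : F →ₗ.[ℂ] E) (hS : IsClosed (S.graph : Set (F × E)))
    (hTi : ∀ u w, (u, w) ∈ Ti.graph ↔ ∀ q s, (q, s) ∈ S.graph → ⟪w, q⟫ = -⟪u, s⟫)
    {u : E} {p : F} (hup : (u, p) ∈ T.graph) :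
    memBD T Ti u ↔ (p, u) ∈ S.graph := by
  constructor
  · rintro ⟨p', hup', horth⟩
    obtain rfl : p' = p := T.mem_graph_snd_inj hup' hup rfl
    refine mem_of_inner_add_inner_eq_zero S.graph hS p' u fun v w hvw => ?_
    have hwv : (w, v) ∈ Ti.graph :=
      (hTi w v).2 fun q s hqs => eq_neg_of_add_eq_zero_left (hvw q s hqs)
    rw [add_comm]
    exact horth w v hwv
  · intro hpu
    refine ⟨p, hup, fun v w hvw => ?_⟩
    rw [(hTi v w).1 hvw p u hpu, add_neg_cancel]

theorem statement0_general
    (G Gi : H₀ →ₗ.[ℂ] H₁) (D Di : H₁ →ₗ.[ℂ] H₀)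
    (hGclosed : IsClosed (G.graph : Set (H₀ × H₁)))
    (hDclosed : IsClosed (D.graph : Set (H₁ × H₀)))
    (hGi : ∀ u w, (u, w) ∈ Gi.graph ↔ ∀ q s, (q, s) ∈ D.graph → ⟪w, q⟫ = -⟪u, s⟫)
    (hDi : ∀ q w, (q, w) ∈ Di.graph ↔ ∀ u p, (u, p) ∈ G.graph → ⟪w, u⟫ = -⟪q, p⟫)
    :
    (∀ u p, (u, p) ∈ G.graph → (memBD G Gi u ↔ (p, u) ∈ D.graph)) ∧
    (∀ q s, (q, s) ∈ D.graph → (memBD D Di q ↔ (s, q) ∈ G.graph)) :=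
  ⟨fun _ _ hup => memBD_iff_mem_graph G Gi D hDclosed hGi hup,
    fun _ _ hqs => memBD_iff_mem_graph D Di G hGclosed hDi hqs⟩

/-- Lemma 2.5: `BD(G) = ker(I - DG)` and `BD(D) = ker(I - GD)`. -/
theorem statement0
    (G Gi : H₀ →ₗ.[ℂ] H₁) (D Di : H₁ →ₗ.[ℂ] H₀)
    (hGdense : Dense (G.domain : Set H₀)) (hDdense : Dense (D.domain : Set H₁))
    (hGclosed : IsClosed (G.graph : Set (H₀ × H₁)))
    (hDclosed : IsClosed (D.graph : Set (H₁ × H₀)))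
    (hGi : ∀ u w, (u, w) ∈ Gi.graph ↔ ∀ q s, (q, s) ∈ D.graph → ⟪w, q⟫ = -⟪u, s⟫)
    (hDi : ∀ q w, (q, w) ∈ Di.graph ↔ ∀ u p, (u, p) ∈ G.graph → ⟪w, u⟫ = -⟪q, p⟫)
    (hGiG : Gi.graph ≤ G.graph) (hDiD : Di.graph ≤ D.graph)
    :
    (∀ u p, (u, p) ∈ G.graph → (memBD G Gi u ↔ (p, u) ∈ D.graph)) ∧
    (∀ q s, (q, s) ∈ D.graph → (memBD D Di q ↔ (s, q) ∈ G.graph)) :=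
  statement0_general G Gi D Di hGclosed hDclosed hGi hDi

end DtNPaper
end
end

section
/- The operators Ġ : BD(G) → BD(D), u ↦ Gu, and Ḋ : BD(D) → BD(G), q ↦ Dq, are well defined and unitary, they are inverse to each other, and (Ġ)* = Ḋ. -/
/-! Because `G̊ = -D*`, the orthogonal complement of the swapped graph `{(D q, q)}` in `H₀ ⊕ H₁`
lies in the graph of `G̊`. So `u ∈ BD(G)`, i.e. `(u, G u) ⊥ graph G̊`, puts `(u, G u)` in the double
orthogonal complement, which by closedness of `D` is the swapped graph itself: `D G u = u`.
Symmetrically `G D q = q` on `BD(D)`. Mutual inversion, and with it unitarity and `(Ġ)* = Ḋ`,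
then reduce to rewriting with these two identities. -/

open Filter Topology

noncomputable section

namespace DtNPaper

local notation "⟪" x ", " y "⟫" => (inner ℂ x y : ℂ)

variable {H₀ H₁ HS : Type*}
  [NormedAddCommGroup H₀] [InnerProductSpace ℂ H₀] [CompleteSpace H₀]
  [NormedAddCommGroup H₁] [InnerProductSpace ℂ H₁] [CompleteSpace H₁]


section

variable {E F : Type*}
  [NormedAddCommGroup E] [InnerProductSpace ℂ E] [NormedAddCommGroup F] [InnerProductSpace ℂ F]

/-- `S = -T*`, phrased through graphs. -/
def IsNegAdjoint (S : E →ₗ.[ℂ] F) (T : F →ₗ.[ℂ] E) : Prop :=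
  ∀ v w, (v, w) ∈ S.graph ↔ ∀ q s, (q, s) ∈ T.graph → ⟪w, q⟫ = -⟪v, s⟫

theorem swap_mem_graph_of_orthogonal_graph [CompleteSpace E] [CompleteSpace F]
    {S : E →ₗ.[ℂ] F} {T : F →ₗ.[ℂ] E}
    (hT : IsClosed (T.graph : Set (F × E))) (hS : IsNegAdjoint S T) {u : E} {p : F}
    (h : ∀ v w, (v, w) ∈ S.graph → ⟪v, u⟫ + ⟪w, p⟫ = 0) :
    (p, u) ∈ T.graph := by
  let W : Submodule ℂ (WithLp 2 (E × F)) := T.graph.comap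
    ((LinearEquiv.prodComm ℂ E F).toLinearMap ∘ₗ (WithLp.linearEquiv 2 ℂ (E × F)).toLinearMap)
  have mem_W : ∀ x, x ∈ W ↔ ((WithLp.ofLp x).2, (WithLp.ofLp x).1) ∈ T.graph := fun _ => Iff.rfl
  have hW_closed : IsClosed (W : Set (WithLp 2 (E × F))) :=
    hT.preimage (continuous_swap.comp (WithLp.prod_continuous_ofLp 2 E F))
  have hW_perp : ∀ x ∈ Wᗮ, ((WithLp.ofLp x).1, (WithLp.ofLp x).2) ∈ S.graph := by
    intro x hx
    refine (hS _ _).2 fun q s hqs => ?_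
    have := Submodule.inner_left_of_mem_orthogonal (K := W) (u := WithLp.toLp 2 (s, q))
      ((mem_W _).2 hqs) hx
    simp only [WithLp.prod_inner_apply] at this
    linear_combination this
  have h_mem : WithLp.toLp 2 (u, p) ∈ Wᗮᗮ := by
    refine (Submodule.mem_orthogonal _ _).2 fun y hy => ?_
    simpa using h _ _ (hW_perp y hy)
  rw [Submodule.orthogonal_orthogonal_eq_closure,
    hW_closed.submodule_topologicalClosure_eq] at h_mem
  exact (mem_W _).1 h_mem

theorem memBD.swap_mem_graph [CompleteSpace E] [CompleteSpace F]
    {T Ti : E →ₗ.[ℂ] F} {T' : F →ₗ.[ℂ] E}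
    (hT' : IsClosed (T'.graph : Set (F × E))) (hTi : IsNegAdjoint Ti T') {u : E} {p : F}
    (hu : memBD T Ti u) (hup : (u, p) ∈ T.graph) : (p, u) ∈ T'.graph := by
  obtain ⟨p₀, hup₀, h_orth⟩ := hu
  rw [T.mem_graph_snd_inj hup hup₀ rfl]
  exact swap_mem_graph_of_orthogonal_graph hT' hTi h_orth

theorem memBD_of_swap_mem_graph {T : E →ₗ.[ℂ] F} {T' Ti' : F →ₗ.[ℂ] E}
    (hTi' : IsNegAdjoint Ti' T) {u : E} {p : F}
    (hup : (u, p) ∈ T.graph) (hpu : (p, u) ∈ T'.graph) : memBD T' Ti' p :=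
  ⟨u, hpu, fun v w hvw => by linear_combination (hTi' v w).1 hvw u p hup⟩

end

theorem statement1_general
    (G Gi : H₀ →ₗ.[ℂ] H₁) (D Di : H₁ →ₗ.[ℂ] H₀)
    (hGclosed : IsClosed (G.graph : Set (H₀ × H₁)))
    (hDclosed : IsClosed (D.graph : Set (H₁ × H₀)))
    (hGi : ∀ u w, (u, w) ∈ Gi.graph ↔ ∀ q s, (q, s) ∈ D.graph → ⟪w, q⟫ = -⟪u, s⟫)
    (hDi : ∀ q w, (q, w) ∈ Di.graph ↔ ∀ u p, (u, p) ∈ G.graph → ⟪w, u⟫ = -⟪q, p⟫)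
    :
    -- Ġ maps BD(G) into BD(D)
    (∀ u p, (u, p) ∈ G.graph → memBD G Gi u → memBD D Di p) ∧
    -- Ḋ maps BD(D) into BD(G)
    (∀ q s, (q, s) ∈ D.graph → memBD D Di q → memBD G Gi s) ∧
    -- Ḋ Ġ = I on BD(G)
    (∀ u p, (u, p) ∈ G.graph → memBD G Gi u → (p, u) ∈ D.graph) ∧
    -- Ġ Ḋ = I on BD(D)
    (∀ q s, (q, s) ∈ D.graph → memBD D Di q → (s, q) ∈ G.graph) ∧
    -- Ġ is surjective onto BD(D)
    (∀ q, memBD D Di q → ∃ u, memBD G Gi u ∧ (u, q) ∈ G.graph) ∧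
    -- Ḋ is surjective onto BD(G)
    (∀ u, memBD G Gi u → ∃ q, memBD D Di q ∧ (q, u) ∈ D.graph) ∧
    -- Ġ preserves the graph inner products : (Ġu, Ġv)_{BD(D)} = (u, v)_{BD(G)}
    (∀ u p u' v s v', (u, p) ∈ G.graph → (p, u') ∈ D.graph →
      (v, s) ∈ G.graph → (s, v') ∈ D.graph → memBD G Gi u → memBD G Gi v →
      ⟪s, p⟫ + ⟪v', u'⟫ = ⟪v, u⟫ + ⟪s, p⟫) ∧
    -- Ḋ preserves the graph inner products : (Ḋq, Ḋr)_{BD(G)} = (q, r)_{BD(D)}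
    (∀ q s q' r t r', (q, s) ∈ D.graph → (s, q') ∈ G.graph →
      (r, t) ∈ D.graph → (t, r') ∈ G.graph → memBD D Di q → memBD D Di r →
      ⟪t, s⟫ + ⟪r', q'⟫ = ⟪r, q⟫ + ⟪t, s⟫) ∧
    -- (Ġ)* = Ḋ : (Ġu, q)_{BD(D)} = (u, Ḋq)_{BD(G)}
    (∀ u p p' q s s', (u, p) ∈ G.graph → (p, p') ∈ D.graph →
      (q, s) ∈ D.graph → (s, s') ∈ G.graph → memBD G Gi u → memBD D Di q →
      ⟪q, p⟫ + ⟪s, p'⟫ = ⟪s, u⟫ + ⟪s', p⟫) := by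
  have DG_id : ∀ u p, (u, p) ∈ G.graph → memBD G Gi u → (p, u) ∈ D.graph :=
    fun _ _ hup hu => hu.swap_mem_graph hDclosed hGi hup
  have GD_id : ∀ q s, (q, s) ∈ D.graph → memBD D Di q → (s, q) ∈ G.graph :=
    fun _ _ hqs hq => hq.swap_mem_graph hGclosed hDi hqs
  refine ⟨fun u p hup hu => memBD_of_swap_mem_graph hDi hup (DG_id u p hup hu),
    fun q s hqs hq => memBD_of_swap_mem_graph hGi hqs (GD_id q s hqs hq), DG_id, GD_id,
    fun q ⟨s, hqs, hq⟩ => ?_, fun u ⟨p, hup, hu⟩ => ?_, ?_, ?_, ?_⟩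
  · have hsq := GD_id q s hqs ⟨s, hqs, hq⟩
    exact ⟨s, memBD_of_swap_mem_graph hGi hqs hsq, hsq⟩
  · have hpu := DG_id u p hup ⟨p, hup, hu⟩
    exact ⟨p, memBD_of_swap_mem_graph hDi hup hpu, hpu⟩
  · intro u p u' v s v' hup hpu' hvs hsv' hu hv
    rw [D.mem_graph_snd_inj hpu' (DG_id u p hup hu) rfl,
      D.mem_graph_snd_inj hsv' (DG_id v s hvs hv) rfl, add_comm]
  · intro q s q' r t r' hqs hsq' hrt htr' hq hr
    rw [G.mem_graph_snd_inj hsq' (GD_id q s hqs hq) rfl,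
      G.mem_graph_snd_inj htr' (GD_id r t hrt hr) rfl, add_comm]
  · intro u p p' q s s' hup hpp' hqs hss' hu hq
    rw [D.mem_graph_snd_inj hpp' (DG_id u p hup hu) rfl,
      G.mem_graph_snd_inj hss' (GD_id q s hqs hq) rfl, add_comm]

/-- Lemma 2.7: the operators `Ġ : BD(G) → BD(D)`, `u ↦ G u`, and
`Ḋ : BD(D) → BD(G)`, `q ↦ D q`, are well defined, unitary, mutually inverse,
and `(Ġ)* = Ḋ`. -/
theorem statement1
    (G Gi : H₀ →ₗ.[ℂ] H₁) (D Di : H₁ →ₗ.[ℂ] H₀)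
    (hGdense : Dense (G.domain : Set H₀)) (hDdense : Dense (D.domain : Set H₁))
    (hGclosed : IsClosed (G.graph : Set (H₀ × H₁)))
    (hDclosed : IsClosed (D.graph : Set (H₁ × H₀)))
    (hGi : ∀ u w, (u, w) ∈ Gi.graph ↔ ∀ q s, (q, s) ∈ D.graph → ⟪w, q⟫ = -⟪u, s⟫)
    (hDi : ∀ q w, (q, w) ∈ Di.graph ↔ ∀ u p, (u, p) ∈ G.graph → ⟪w, u⟫ = -⟪q, p⟫)
    (hGiG : Gi.graph ≤ G.graph) (hDiD : Di.graph ≤ D.graph)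
    :
    -- Ġ maps BD(G) into BD(D)
    (∀ u p, (u, p) ∈ G.graph → memBD G Gi u → memBD D Di p) ∧
    -- Ḋ maps BD(D) into BD(G)
    (∀ q s, (q, s) ∈ D.graph → memBD D Di q → memBD G Gi s) ∧
    -- Ḋ Ġ = I on BD(G)
    (∀ u p, (u, p) ∈ G.graph → memBD G Gi u → (p, u) ∈ D.graph) ∧
    -- Ġ Ḋ = I on BD(D)
    (∀ q s, (q, s) ∈ D.graph → memBD D Di q → (s, q) ∈ G.graph) ∧
    -- Ġ is surjective onto BD(D)
    (∀ q, memBD D Di q → ∃ u, memBD G Gi u ∧ (u, q) ∈ G.graph) ∧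
    -- Ḋ is surjective onto BD(G)
    (∀ u, memBD G Gi u → ∃ q, memBD D Di q ∧ (q, u) ∈ D.graph) ∧
    -- Ġ preserves the graph inner products : (Ġu, Ġv)_{BD(D)} = (u, v)_{BD(G)}
    (∀ u p u' v s v', (u, p) ∈ G.graph → (p, u') ∈ D.graph →
      (v, s) ∈ G.graph → (s, v') ∈ D.graph → memBD G Gi u → memBD G Gi v →
      ⟪s, p⟫ + ⟪v', u'⟫ = ⟪v, u⟫ + ⟪s, p⟫) ∧
    -- Ḋ preserves the graph inner products : (Ḋq, Ḋr)_{BD(G)} = (q, r)_{BD(D)}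
    (∀ q s q' r t r', (q, s) ∈ D.graph → (s, q') ∈ G.graph →
      (r, t) ∈ D.graph → (t, r') ∈ G.graph → memBD D Di q → memBD D Di r →
      ⟪t, s⟫ + ⟪r', q'⟫ = ⟪r, q⟫ + ⟪t, s⟫) ∧
    -- (Ġ)* = Ḋ : (Ġu, q)_{BD(D)} = (u, Ḋq)_{BD(G)}
    (∀ u p p' q s s', (u, p) ∈ G.graph → (p, p') ∈ D.graph →
      (q, s) ∈ D.graph → (s, s') ∈ G.graph → memBD G Gi u → memBD D Di q →
      ⟪q, p⟫ + ⟪s, p'⟫ = ⟪s, u⟫ + ⟪s', p⟫) :=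
  statement1_general G Gi D Di hGclosed hDclosed hGi hDi

end DtNPaper
end
end

section
/- Let BD(G)' denote the space of all continuous antilinear functionals on BD(G) with its dual norm. Then the map Φ : BD(D) → BD(G)' defined by (Φ(q))(u) = (Dq, u)_{H₀} + (q, Gu)_{H₁} for q ∈ BD(D) and u ∈ BD(G) is well defined and unitary (a surjective linear isometry onto BD(G)'). -/
open Filter Topology

noncomputable section

namespace DtNPaper

local notation "⟪" x ", " y "⟫" => (inner ℂ x y : ℂ)

variable {H₀ H₁ HS : Type*}
  [NormedAddCommGroup H₀] [InnerProductSpace ℂ H₀] [CompleteSpace H₀]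
  [NormedAddCommGroup H₁] [InnerProductSpace ℂ H₁] [CompleteSpace H₁]

/-!
For `u ∈ dom G`, orthogonality to `dom G̊ = dom (-D*)` in the graph norm says that `(Gu, u)`
is orthogonal to `(graph D)^⊥`, i.e. (the graph being closed) `DGu = u`; symmetrically
`q ∈ BD(D)` iff `GDq = q`. So `u ↦ (u, Gu)` and `q ↦ (Dq, q)` identify `BD(G)` and `BD(D)`
isometrically with one and the same closed subspace `{(u, p) : p = Gu, u = Dp}` of the
`L²` product `H₀ × H₁`, and `Φ(q)(u)` is the inner product of the corresponding pairs.
Thus `Φ` is the Riesz map of a Hilbert space, hence unitary.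
-/

section PairSpace

variable {E F : Type*} [NormedAddCommGroup E] [NormedAddCommGroup F]

theorem norm_toLp_pair (u : E) (p : F) :
    ‖WithLp.toLp 2 (u, p)‖ = Real.sqrt (‖u‖ ^ 2 + ‖p‖ ^ 2) :=
  WithLp.prod_norm_eq_of_L2 _

variable [InnerProductSpace ℂ E] [InnerProductSpace ℂ F]

theorem inner_toLp_pair (u s : E) (p q : F) :
    ⟪WithLp.toLp 2 (u, p), WithLp.toLp 2 (s, q)⟫ = ⟪u, s⟫ + ⟪p, q⟫ :=
  rfl

theorem norm_inner_add_inner_le (u s : E) (p q : F) :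
    ‖⟪u, s⟫ + ⟪p, q⟫‖ ≤
      Real.sqrt (‖q‖ ^ 2 + ‖s‖ ^ 2) * Real.sqrt (‖u‖ ^ 2 + ‖p‖ ^ 2) := by
  rw [← inner_toLp_pair, mul_comm, add_comm (‖q‖ ^ 2), ← norm_toLp_pair, ← norm_toLp_pair]
  exact norm_inner_le_norm _ _

theorem mem_of_isClosed_of_orthogonal_orthogonal [CompleteSpace E] [CompleteSpace F]
    (S : Submodule ℂ (E × F)) (hS : IsClosed (S : Set (E × F))) (x : E × F)
    (h : ∀ a b, (∀ y ∈ S, ⟪a, y.1⟫ + ⟪b, y.2⟫ = 0) → ⟪a, x.1⟫ + ⟪b, x.2⟫ = 0) :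
    x ∈ S := by
  set S₂ : Submodule ℂ (WithLp 2 (E × F)) :=
    S.comap (WithLp.linearEquiv 2 ℂ (E × F)).toLinearMap
  have hS₂ : IsClosed (S₂ : Set (WithLp 2 (E × F))) :=
    hS.preimage (WithLp.prodContinuousLinearEquiv 2 ℂ E F).continuous
  have : CompleteSpace S₂ := hS₂.completeSpace_coe
  have hx : WithLp.toLp 2 x ∈ S₂ᗮᗮ := by
    rw [Submodule.mem_orthogonal]
    intro a ha
    rw [Submodule.mem_orthogonal'] at ha
    exact h a.fst a.snd fun y hy => ha (WithLp.toLp 2 y) hy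
  rwa [Submodule.orthogonal_orthogonal] at hx

theorem memBD_iff_mem_graph_swap [CompleteSpace E] [CompleteSpace F]
    (T Ti : E →ₗ.[ℂ] F) (S : F →ₗ.[ℂ] E) (hS : IsClosed (S.graph : Set (F × E)))
    (hTi : ∀ v w, (v, w) ∈ Ti.graph ↔ ∀ q s, (q, s) ∈ S.graph → ⟪w, q⟫ = -⟪v, s⟫)
    {u : E} {p : F} (hup : (u, p) ∈ T.graph) :
    memBD T Ti u ↔ (p, u) ∈ S.graph := by
  constructor
  · rintro ⟨p', hp', horth⟩
    obtain rfl : p' = p := T.mem_graph_snd_inj hp' hup rfl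
    refine mem_of_isClosed_of_orthogonal_orthogonal S.graph hS (p', u) fun a b hab => ?_
    have hba : (b, a) ∈ Ti.graph := (hTi b a).mpr fun q s hqs =>
      eq_neg_of_add_eq_zero_left (hab (q, s) hqs)
    linear_combination horth b a hba
  · intro hpu
    refine ⟨p, hup, fun v w hvw => ?_⟩
    rw [(hTi v w).mp hvw p u hpu, add_neg_cancel]

def bdPairs (G : E →ₗ.[ℂ] F) (D : F →ₗ.[ℂ] E) : Submodule ℂ (WithLp 2 (E × F)) :=
  (G.graph ⊓ D.graph.comap (LinearEquiv.prodComm ℂ E F).toLinearMap).comap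
    (WithLp.linearEquiv 2 ℂ (E × F)).toLinearMap

theorem toLp_mem_bdPairs_iff (G : E →ₗ.[ℂ] F) (D : F →ₗ.[ℂ] E) (u : E) (p : F) :
    WithLp.toLp 2 (u, p) ∈ bdPairs G D ↔ (u, p) ∈ G.graph ∧ (p, u) ∈ D.graph :=
  Iff.rfl

theorem isClosed_bdPairs (G : E →ₗ.[ℂ] F) (D : F →ₗ.[ℂ] E)
    (hG : IsClosed (G.graph : Set (E × F))) (hD : IsClosed (D.graph : Set (F × E))) :
    IsClosed (bdPairs G D : Set (WithLp 2 (E × F))) :=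
  (hG.inter (hD.preimage continuous_swap)).preimage
    (WithLp.prodContinuousLinearEquiv 2 ℂ E F).continuous

end PairSpace

section Hilbert

variable {E : Type*} [NormedAddCommGroup E] [InnerProductSpace ℂ E]

theorem sSup_norm_inner_eq_norm (K : Submodule ℂ E) {y : E} (hy : y ∈ K) :
    sSup {r : ℝ | ∃ x ∈ K, ‖x‖ ≤ 1 ∧ r = ‖⟪x, y⟫‖} = ‖y‖ := by
  have hbound : ∀ r ∈ {r : ℝ | ∃ x ∈ K, ‖x‖ ≤ 1 ∧ r = ‖⟪x, y⟫‖}, r ≤ ‖y‖ := by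
    rintro r ⟨x, -, hx, rfl⟩
    calc ‖⟪x, y⟫‖ ≤ ‖x‖ * ‖y‖ := norm_inner_le_norm x y
      _ ≤ 1 * ‖y‖ := by gcongr
      _ = ‖y‖ := one_mul _
  -- the supremum is attained at `y / ‖y‖` (at `0` when `y = 0`)
  set x : E := ((‖y‖⁻¹ : ℝ) : ℂ) • y
  have hx : ‖x‖ ≤ 1 := by
    rw [norm_smul, Complex.norm_real, norm_inv, norm_norm]
    exact inv_mul_le_one
  have hxy : ‖⟪x, y⟫‖ = ‖y‖ := by
    rw [inner_smul_left, Complex.conj_ofReal, inner_self_eq_norm_sq_to_K]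
    rcases eq_or_ne ‖y‖ 0 with h | h
    · simp [h]
    · simp only [norm_mul, norm_pow, Complex.norm_real, norm_inv, norm_norm, RCLike.norm_ofReal,
        abs_norm]
      field_simp
  exact le_antisymm (csSup_le ⟨‖⟪x, y⟫‖, x, K.smul_mem _ hy, hx, rfl⟩ hbound)
    (le_csSup ⟨‖y‖, hbound⟩ ⟨x, K.smul_mem _ hy, hx, hxy.symm⟩)

theorem exists_mem_eq_inner_of_antilinear (K : Submodule ℂ E) [CompleteSpace K] (f : E → ℂ)
    (hadd : ∀ x ∈ K, ∀ y ∈ K, f (x + y) = f x + f y)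
    (hsmul : ∀ (c : ℂ), ∀ x ∈ K, f (c • x) = starRingEnd ℂ c * f x)
    (C : ℝ) (hC : ∀ x ∈ K, ‖f x‖ ≤ C * ‖x‖) :
    ∃ z ∈ K, ∀ x ∈ K, f x = ⟪x, z⟫ := by
  let g : K →ₗ[ℂ] ℂ :=
    { toFun := fun x => starRingEnd ℂ (f x)
      map_add' := fun x y => by simp only [K.coe_add, hadd x x.2 y y.2, map_add]
      map_smul' := fun c x => by simp [K.coe_smul, hsmul c x x.2] }
  have hg : ∀ x : K, ‖g x‖ ≤ C * ‖x‖ := fun x => by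
    simpa [g] using hC x x.2
  set z : K := (InnerProductSpace.toDual ℂ K).symm (g.mkContinuous C hg)
  refine ⟨z, z.2, fun x hx => ?_⟩
  have hz : ⟪(z : E), x⟫ = starRingEnd ℂ (f x) :=
    InnerProductSpace.toDual_symm_apply (x := (⟨x, hx⟩ : K))
  rw [← inner_conj_symm, hz, Complex.conj_conj]

end Hilbert

theorem statement2_general
    (G Gi : H₀ →ₗ.[ℂ] H₁) (D Di : H₁ →ₗ.[ℂ] H₀)
    (hGclosed : IsClosed (G.graph : Set (H₀ × H₁)))
    (hDclosed : IsClosed (D.graph : Set (H₁ × H₀)))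
    (hGi : ∀ u w, (u, w) ∈ Gi.graph ↔ ∀ q s, (q, s) ∈ D.graph → ⟪w, q⟫ = -⟪u, s⟫)
    (hDi : ∀ q w, (q, w) ∈ Di.graph ↔ ∀ u p, (u, p) ∈ G.graph → ⟪w, u⟫ = -⟪q, p⟫)
    :
    -- each Φ(q) is a bounded antilinear functional with norm ≤ ‖q‖_{BD(D)}
    (∀ q s u p, (q, s) ∈ D.graph → memBD D Di q → (u, p) ∈ G.graph →
      memBD G Gi u →
      ‖⟪u, s⟫ + ⟪p, q⟫‖ ≤
        Real.sqrt (‖q‖ ^ 2 + ‖s‖ ^ 2) * Real.sqrt (‖u‖ ^ 2 + ‖p‖ ^ 2)) ∧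
    -- Φ is isometric: the dual norm of Φ(q) equals ‖q‖_{BD(D)}
    (∀ q s, (q, s) ∈ D.graph → memBD D Di q →
      sSup {r : ℝ | ∃ u p, (u, p) ∈ G.graph ∧ memBD G Gi u ∧
          ‖u‖ ^ 2 + ‖p‖ ^ 2 ≤ 1 ∧ r = ‖⟪u, s⟫ + ⟪p, q⟫‖} =
        Real.sqrt (‖q‖ ^ 2 + ‖s‖ ^ 2)) ∧
    -- Φ is surjective: every continuous antilinear functional on BD(G) is Φ(q)
    (∀ F : H₀ → ℂ,
      (∀ u v, memBD G Gi u → memBD G Gi v → F (u + v) = F u + F v) →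
      (∀ (c : ℂ) u, memBD G Gi u → F (c • u) = (starRingEnd ℂ) c * F u) →
      (∃ C : ℝ, ∀ u p, (u, p) ∈ G.graph → memBD G Gi u →
        ‖F u‖ ≤ C * Real.sqrt (‖u‖ ^ 2 + ‖p‖ ^ 2)) →
      ∃ q s, (q, s) ∈ D.graph ∧ memBD D Di q ∧
        ∀ u p, (u, p) ∈ G.graph → memBD G Gi u → F u = ⟪u, s⟫ + ⟪p, q⟫) := by
  have hBDG : ∀ {u p}, (u, p) ∈ G.graph →
      (memBD G Gi u ↔ WithLp.toLp 2 (u, p) ∈ bdPairs G D) := fun hup =>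
    (memBD_iff_mem_graph_swap G Gi D hDclosed hGi hup).trans
      ((toLp_mem_bdPairs_iff G D _ _).trans (and_iff_right hup)).symm
  have hBDD : ∀ {q s}, (q, s) ∈ D.graph →
      (memBD D Di q ↔ WithLp.toLp 2 (s, q) ∈ bdPairs G D) := fun hqs =>
    (memBD_iff_mem_graph_swap D Di G hGclosed hDi hqs).trans
      ((toLp_mem_bdPairs_iff G D _ _).trans (and_iff_left hqs)).symm
  refine ⟨fun q s u p _ _ _ _ => norm_inner_add_inner_le u s p q, ?_, ?_⟩
  · intro q s hqs hq
    rw [add_comm (‖q‖ ^ 2), ← norm_toLp_pair,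
      ← sSup_norm_inner_eq_norm _ ((hBDD hqs).mp hq)]
    congr 1
    ext r
    constructor
    · rintro ⟨u, p, hup, hu, hle, rfl⟩
      exact ⟨_, (hBDG hup).mp hu, by rwa [norm_toLp_pair, Real.sqrt_le_one], rfl⟩
    · rintro ⟨⟨u, p⟩, hx, hle, rfl⟩
      refine ⟨u, p, hx.1, (hBDG hx.1).mpr hx, ?_, rfl⟩
      rwa [norm_toLp_pair, Real.sqrt_le_one] at hle
  · rintro F hadd hsmul ⟨C, hC⟩
    have := (isClosed_bdPairs G D hGclosed hDclosed).completeSpace_coe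
    have hmem : ∀ x ∈ bdPairs G D, memBD G Gi x.fst := fun x hx =>
      (hBDG hx.1).mpr hx
    obtain ⟨⟨s, q⟩, hz, hFz⟩ := exists_mem_eq_inner_of_antilinear (bdPairs G D)
      (fun x => F x.fst) (fun x hx y hy => hadd _ _ (hmem x hx) (hmem y hy))
      (fun c x hx => hsmul c _ (hmem x hx)) C
      (fun x hx => by rw [WithLp.prod_norm_eq_of_L2]; exact hC _ _ hx.1 (hmem x hx))
    exact ⟨q, s, hz.2, (hBDD hz.2).mpr hz, fun u p hup hu =>
      hFz (WithLp.toLp 2 (u, p)) ((hBDG hup).mp hu)⟩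

/-- Proposition 2.8: the map `Φ : BD(D) → BD(G)'`,
`(Φ q) u = (D q, u)_{H₀} + (q, G u)_{H₁}`, is well defined and unitary onto the
space of continuous antilinear functionals on `BD(G)`. -/
theorem statement2
    (G Gi : H₀ →ₗ.[ℂ] H₁) (D Di : H₁ →ₗ.[ℂ] H₀)
    (hGdense : Dense (G.domain : Set H₀)) (hDdense : Dense (D.domain : Set H₁))
    (hGclosed : IsClosed (G.graph : Set (H₀ × H₁)))
    (hDclosed : IsClosed (D.graph : Set (H₁ × H₀)))
    (hGi : ∀ u w, (u, w) ∈ Gi.graph ↔ ∀ q s, (q, s) ∈ D.graph → ⟪w, q⟫ = -⟪u, s⟫)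
    (hDi : ∀ q w, (q, w) ∈ Di.graph ↔ ∀ u p, (u, p) ∈ G.graph → ⟪w, u⟫ = -⟪q, p⟫)
    (hGiG : Gi.graph ≤ G.graph) (hDiD : Di.graph ≤ D.graph)
    :
    -- each Φ(q) is a bounded antilinear functional with norm ≤ ‖q‖_{BD(D)}
    (∀ q s u p, (q, s) ∈ D.graph → memBD D Di q → (u, p) ∈ G.graph →
      memBD G Gi u →
      ‖⟪u, s⟫ + ⟪p, q⟫‖ ≤
        Real.sqrt (‖q‖ ^ 2 + ‖s‖ ^ 2) * Real.sqrt (‖u‖ ^ 2 + ‖p‖ ^ 2)) ∧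
    -- Φ is isometric: the dual norm of Φ(q) equals ‖q‖_{BD(D)}
    (∀ q s, (q, s) ∈ D.graph → memBD D Di q →
      sSup {r : ℝ | ∃ u p, (u, p) ∈ G.graph ∧ memBD G Gi u ∧
          ‖u‖ ^ 2 + ‖p‖ ^ 2 ≤ 1 ∧ r = ‖⟪u, s⟫ + ⟪p, q⟫‖} =
        Real.sqrt (‖q‖ ^ 2 + ‖s‖ ^ 2)) ∧
    -- Φ is surjective: every continuous antilinear functional on BD(G) is Φ(q)
    (∀ F : H₀ → ℂ,
      (∀ u v, memBD G Gi u → memBD G Gi v → F (u + v) = F u + F v) →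
      (∀ (c : ℂ) u, memBD G Gi u → F (c • u) = (starRingEnd ℂ) c * F u) →
      (∃ C : ℝ, ∀ u p, (u, p) ∈ G.graph → memBD G Gi u →
        ‖F u‖ ≤ C * Real.sqrt (‖u‖ ^ 2 + ‖p‖ ^ 2)) →
      ∃ q s, (q, s) ∈ D.graph ∧ memBD D Di q ∧
        ∀ u p, (u, p) ∈ G.graph → memBD G Gi u → F u = ⟪u, s⟫ + ⟪p, q⟫) :=
  statement2_general G Gi D Di hGclosed hDclosed hGi hDi

end DtNPaper
end
end

section
/- Let H be a complex Hilbert space, M a bounded operator on H and A a skew-adjoint operator in H (i.e. A* = −A). Let λ > 0 and assume Re(Mx, x)_H ≥ λ‖x‖²_H for all x ∈ H. Then the operator M + A with domain dom(A) is bijective from dom(A) onto H, its inverse (M + A)^{-1} is bounded from H into dom(A) (with the graph norm of A), and ‖(M + A)^{-1}‖_{H → dom(A)} ≤ (1 + λ + ‖M‖)/λ. -/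
open Filter Topology

noncomputable section

namespace DtNPaper

local notation "⟪" x ", " y "⟫" => (inner ℂ x y : ℂ)

variable {H₀ H₁ HS : Type*}
  [NormedAddCommGroup H₀] [InnerProductSpace ℂ H₀] [CompleteSpace H₀]
  [NormedAddCommGroup H₁] [InnerProductSpace ℂ H₁] [CompleteSpace H₁]

/-! On `dom A` skewness gives `Re (x, A x) = 0`, hence `λ ‖x‖² ≤ Re (x, (M + A) x)`,
so `λ ‖x‖ ≤ ‖(M + A) x‖` and `‖A x‖ ≤ ‖(M + A) x‖ + ‖M‖ ‖x‖`: this is the graph-norm bound.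
It makes `M + A` injective with closed range, since the graph of a skew-adjoint operator is
closed. A vector `f` orthogonal to the range lies in `dom A* = dom A` with `A f = M* f`, so
`Re (f, M f) = Re (f, M* f) = 0` and `f = 0`; hence the range is all of `H`. -/

section

variable {E : Type*} [NormedAddCommGroup E] [InnerProductSpace ℂ E]

/-- `A* = -A`, read on graphs: `(x, -y) ∈ graph A` iff `y = A* x`. -/
def IsSkewAdjoint (A : E →ₗ.[ℂ] E) : Prop :=
  ∀ x y, ((x, -y) ∈ A.graph ↔ ∀ u v, (u, v) ∈ A.graph → ⟪y, u⟫ = ⟪x, v⟫)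

/-- `M + A` with domain `dom A`, parametrised by the graph of `A`. -/
def addOnGraph (M : E →L[ℂ] E) (A : E →ₗ.[ℂ] E) : A.graph →L[ℂ] E :=
  (M.coprod (ContinuousLinearMap.id ℂ E)).comp A.graph.subtypeL

@[simp]
theorem addOnGraph_apply (M : E →L[ℂ] E) (A : E →ₗ.[ℂ] E) (z : A.graph) :
    addOnGraph M A z = M (z : E × E).1 + (z : E × E).2 :=
  rfl

variable {M : E →L[ℂ] E} {A : E →ₗ.[ℂ] E} {lam : ℝ}

theorem IsSkewAdjoint.mem_graph_iff (hA : IsSkewAdjoint A) {x y : E} :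
    (x, y) ∈ A.graph ↔ ∀ u v, (u, v) ∈ A.graph → ⟪-y, u⟫ = ⟪x, v⟫ := by
  simpa using hA x (-y)

theorem IsSkewAdjoint.re_inner_eq_zero (hA : IsSkewAdjoint A) {x v : E}
    (hxv : (x, v) ∈ A.graph) : (⟪x, v⟫).re = 0 := by
  have h := congrArg Complex.re (hA.mem_graph_iff.mp hxv x v hxv)
  have hsymm : (⟪v, x⟫).re = (⟪x, v⟫).re := inner_re_symm (𝕜 := ℂ) v x
  rw [inner_neg_left, Complex.neg_re, hsymm] at h
  linarith

theorem IsSkewAdjoint.isClosed_graph (hA : IsSkewAdjoint A) :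
    IsClosed (A.graph : Set (E × E)) := by
  have hgraph : (A.graph : Set (E × E)) =
      ⋂ z ∈ A.graph, {p : E × E | ⟪-p.2, z.1⟫ = ⟪p.1, z.2⟫} := by
    ext ⟨x, y⟩
    simp only [SetLike.mem_coe, Set.mem_iInter, Set.mem_ofPred_eq, Prod.forall]
    exact hA.mem_graph_iff
  rw [hgraph]
  exact isClosed_biInter fun z _ => isClosed_eq (by fun_prop) (by fun_prop)

theorem mul_norm_le_norm_add (hM : ∀ x : E, lam * ‖x‖ ^ 2 ≤ (⟪x, M x⟫).re) {x v : E}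
    (hxv : (⟪x, v⟫).re = 0) : lam * ‖x‖ ≤ ‖M x + v‖ := by
  rcases (norm_nonneg x).eq_or_lt with hx | hx
  · simp [← hx]
  have h : lam * ‖x‖ * ‖x‖ ≤ ‖M x + v‖ * ‖x‖ :=
    calc lam * ‖x‖ * ‖x‖ ≤ (⟪x, M x + v⟫).re := by
          rw [inner_add_right, Complex.add_re, hxv, add_zero, mul_assoc, ← sq]
          exact hM x
      _ ≤ ‖x‖ * ‖M x + v‖ := re_inner_le_norm (𝕜 := ℂ) x _
      _ = ‖M x + v‖ * ‖x‖ := mul_comm _ _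
  exact le_of_mul_le_mul_right h hx

theorem norm_add_norm_le (hlam : 0 < lam) (hM : ∀ x : E, lam * ‖x‖ ^ 2 ≤ (⟪x, M x⟫).re)
    {x v : E} (hxv : (⟪x, v⟫).re = 0) :
    ‖x‖ + ‖v‖ ≤ (1 + lam + ‖M‖) / lam * ‖M x + v‖ := by
  have hx := mul_norm_le_norm_add hM hxv
  have hv : ‖v‖ ≤ ‖M x + v‖ + ‖M‖ * ‖x‖ :=
    calc ‖v‖ = ‖(M x + v) - M x‖ := by rw [add_sub_cancel_left]
      _ ≤ ‖M x + v‖ + ‖M x‖ := norm_sub_le _ _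
      _ ≤ ‖M x + v‖ + ‖M‖ * ‖x‖ := by gcongr; exact M.le_opNorm x
  rw [div_mul_eq_mul_div, le_div_iff₀ hlam]
  nlinarith [norm_nonneg M]

theorem antilipschitzWith_addOnGraph (hlam : 0 < lam)
    (hM : ∀ x : E, lam * ‖x‖ ^ 2 ≤ (⟪x, M x⟫).re) (hA : IsSkewAdjoint A) :
    AntilipschitzWith ((1 + lam + ‖M‖) / lam).toNNReal (addOnGraph M A) := by
  refine (addOnGraph M A).antilipschitz_of_bound fun ⟨⟨x, v⟩, hxv⟩ => ?_
  rw [Real.coe_toNNReal _ (by positivity), addOnGraph_apply]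
  calc ‖(⟨(x, v), hxv⟩ : A.graph)‖ = max ‖x‖ ‖v‖ := rfl
    _ ≤ ‖x‖ + ‖v‖ := max_le_add_of_nonneg (norm_nonneg x) (norm_nonneg v)
    _ ≤ _ := norm_add_norm_le hlam hM (hA.re_inner_eq_zero hxv)

theorem orthogonal_range_addOnGraph [CompleteSpace E] (hlam : 0 < lam)
    (hM : ∀ x : E, lam * ‖x‖ ^ 2 ≤ (⟪x, M x⟫).re) (hA : IsSkewAdjoint A) :
    (LinearMap.range (addOnGraph M A).toLinearMap)ᗮ = ⊥ := by
  refine (Submodule.eq_bot_iff _).mpr fun f hf => ?_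
  have horth : ∀ u v, (u, v) ∈ A.graph → ⟪f, M u⟫ + ⟪f, v⟫ = 0 := fun u v huv => by
    rw [← inner_add_right]
    exact Submodule.inner_left_of_mem_orthogonal
      (LinearMap.mem_range_self (addOnGraph M A).toLinearMap ⟨(u, v), huv⟩) hf
  have hgraph : (f, M.adjoint f) ∈ A.graph := hA.mem_graph_iff.mpr fun u v huv => by
    rw [inner_neg_left, ContinuousLinearMap.adjoint_inner_left]
    linear_combination -horth u v huv
  have hre : (⟪f, M f⟫).re = 0 := by
    have h := hA.re_inner_eq_zero hgraph
    rwa [← inner_conj_symm, ContinuousLinearMap.adjoint_inner_left, Complex.conj_re] at h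
  have hnorm : lam * ‖f‖ ^ 2 ≤ 0 := hre ▸ hM f
  exact norm_eq_zero.mp (pow_eq_zero_iff two_ne_zero |>.mp
    (le_antisymm (nonpos_of_mul_nonpos_right hnorm hlam) (sq_nonneg _)))

theorem bijective_addOnGraph [CompleteSpace E] (hlam : 0 < lam)
    (hM : ∀ x : E, lam * ‖x‖ ^ 2 ≤ (⟪x, M x⟫).re) (hA : IsSkewAdjoint A) :
    Function.Bijective (addOnGraph M A) := by
  have hanti := antilipschitzWith_addOnGraph hlam hM hA
  have : CompleteSpace A.graph :=
    completeSpace_coe_iff_isComplete.mpr hA.isClosed_graph.isComplete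
  have : CompleteSpace (LinearMap.range (addOnGraph M A).toLinearMap) :=
    completeSpace_coe_iff_isComplete.mpr
      (hanti.isComplete_range (addOnGraph M A).uniformContinuous)
  refine ⟨hanti.injective, LinearMap.range_eq_top.mp ?_⟩
  exact Submodule.orthogonal_eq_bot_iff.mp (orthogonal_range_addOnGraph hlam hM hA)

end

theorem statement3_general {H : Type*} [NormedAddCommGroup H] [InnerProductSpace ℂ H]
    [CompleteSpace H]
    (M : H →L[ℂ] H) (A : H →ₗ.[ℂ] H)
    (hskew : ∀ x y, ((x, -y) ∈ A.graph ↔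
      ∀ u v, (u, v) ∈ A.graph → ⟪y, u⟫ = ⟪x, v⟫))
    (lam : ℝ) (hlam : 0 < lam)
    (hM : ∀ x : H, lam * ‖x‖ ^ 2 ≤ (⟪x, M x⟫).re) :
    -- M + A is bijective from dom A onto H
    (∀ f : H, ∃! z : H × H, z ∈ A.graph ∧ M z.1 + z.2 = f) ∧
    -- the inverse is bounded from H into dom A with the stated bound
    (∀ f x v, (x, v) ∈ A.graph → M x + v = f →
      Real.sqrt (‖x‖ ^ 2 + ‖v‖ ^ 2) ≤ ((1 + lam + ‖M‖) / lam) * ‖f‖) := by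
  have hA : IsSkewAdjoint A := hskew
  have hbij := bijective_addOnGraph hlam hM hA
  refine ⟨fun f => ?_, fun f x v hxv hf => ?_⟩
  · obtain ⟨z, hz⟩ := hbij.surjective f
    refine ⟨z, ⟨z.2, hz⟩, fun w ⟨hw, hwf⟩ => ?_⟩
    have hwz : addOnGraph M A ⟨w, hw⟩ = addOnGraph M A z := hwf.trans hz.symm
    exact congrArg Subtype.val (hbij.injective hwz)
  · calc √(‖x‖ ^ 2 + ‖v‖ ^ 2) ≤ ‖x‖ + ‖v‖ :=
          Real.sqrt_le_iff.mpr ⟨by positivity, by nlinarith [norm_nonneg x, norm_nonneg v]⟩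
      _ ≤ (1 + lam + ‖M‖) / lam * ‖f‖ :=
          hf ▸ norm_add_norm_le hlam hM (hA.re_inner_eq_zero hxv)

/-- Lemma 2.10: if `M` is bounded with `Re (M x, x) ≥ λ ‖x‖²` and `A` is
skew-adjoint, then `M + A` (with domain `dom A`) is invertible and
`‖(M + A)⁻¹‖_{H → dom A} ≤ (1 + λ + ‖M‖)/λ`. -/
theorem statement3 {H : Type*} [NormedAddCommGroup H] [InnerProductSpace ℂ H]
    [CompleteSpace H]
    (M : H →L[ℂ] H) (A : H →ₗ.[ℂ] H)
    (hAdense : Dense (A.domain : Set H))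
    (hskew : ∀ x y, ((x, -y) ∈ A.graph ↔
      ∀ u v, (u, v) ∈ A.graph → ⟪y, u⟫ = ⟪x, v⟫))
    (lam : ℝ) (hlam : 0 < lam)
    (hM : ∀ x : H, lam * ‖x‖ ^ 2 ≤ (⟪x, M x⟫).re) :
    -- M + A is bijective from dom A onto H
    (∀ f : H, ∃! z : H × H, z ∈ A.graph ∧ M z.1 + z.2 = f) ∧
    -- the inverse is bounded from H into dom A with the stated bound
    (∀ f x v, (x, v) ∈ A.graph → M x + v = f →
      Real.sqrt (‖x‖ ^ 2 + ‖v‖ ^ 2) ≤ ((1 + lam + ‖M‖) / lam) * ‖f‖) :=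
  statement3_general M A hskew lam hlam hM

end DtNPaper
end
end

section
/- Let a be a coercive bounded operator on H₁ and m a coercive bounded operator on H₀. Then: (i) the block operators (m, −D̊; −G, a⁻¹) with domain dom(G) × dom(D̊) and (m, −D; −G̊, a⁻¹) with domain dom(G̊) × dom(D) are both bijective onto H₀ × H₁; (ii) the inverse of the first block operator is bounded from H₀ × H₁ into dom(G) × dom(D̊) (graph norms); (iii) the inverse of the second block operator is bounded from H₀ × H₁ into dom(G̊) × dom(D) (graph norms). -/
/-!
Both block operators are bounded below: for `(u, p)` in the graph of `G` (resp. `G̊`) and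
`(q, w)` in that of `D̊` (resp. `D`) the skew pairing `⟪w, u⟫ = -⟪q, p⟫` kills the off-diagonal
terms in `Re ⟪(u, q), (m u - w, a⁻¹ q - p)⟫`, which is therefore at least `μ (‖u‖² + ‖q‖²)`;
the remaining components are recovered from the equations. Hence each operator is injective
with closed range. Its range is dense because an element `(f, g)` orthogonal to it produces,
through the adjoint relation between the two graphs, `Re ⟪f, m f⟫ + Re ⟪g, a⁻¹ g⟫ = 0`.
The second operator is the first one for the pair `(D, G̊)` with the roles of `m` and `a⁻¹`
exchanged.
-/

open Filter Topology

noncomputable section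

namespace DtNPaper

local notation "⟪" x ", " y "⟫" => (inner ℂ x y : ℂ)

section Coercive

variable {E F : Type*} [NormedAddCommGroup E] [InnerProductSpace ℂ E]
  [NormedAddCommGroup F] [InnerProductSpace ℂ F]

theorem Coercive.of_rightInverse {a c : F →L[ℂ] F} (ha : Coercive a)
    (hac : Function.RightInverse c a) : Coercive c := by
  obtain ⟨μ, hμ, ha⟩ := ha
  refine ⟨μ / (‖a‖ + 1) ^ 2, by positivity, fun x => ?_⟩
  have hre : (⟪x, c x⟫).re = (⟪c x, a (c x)⟫).re := by
    rw [hac x, ← inner_conj_symm, Complex.conj_re]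
  have hx : ‖x‖ ≤ (‖a‖ + 1) * ‖c x‖ := by
    calc ‖x‖ = ‖a (c x)‖ := by rw [hac x]
      _ ≤ ‖a‖ * ‖c x‖ := a.le_opNorm _
      _ ≤ (‖a‖ + 1) * ‖c x‖ := by nlinarith [norm_nonneg (c x)]
  calc μ / (‖a‖ + 1) ^ 2 * ‖x‖ ^ 2 ≤ μ / (‖a‖ + 1) ^ 2 * ((‖a‖ + 1) * ‖c x‖) ^ 2 := by
        gcongr
    _ = μ * ‖c x‖ ^ 2 := by field_simp
    _ ≤ (⟪x, c x⟫).re := hre ▸ ha (c x)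

theorem Coercive.exists_common_const {m : E →L[ℂ] E} {c : F →L[ℂ] F}
    (hm : Coercive m) (hc : Coercive c) :
    ∃ μ : ℝ, 0 < μ ∧ (∀ x, μ * ‖x‖ ^ 2 ≤ (⟪x, m x⟫).re) ∧
      ∀ y, μ * ‖y‖ ^ 2 ≤ (⟪y, c y⟫).re := by
  obtain ⟨μm, hμm, hm⟩ := hm
  obtain ⟨μc, hμc, hc⟩ := hc
  refine ⟨min μm μc, lt_min hμm hμc, fun x => ?_, fun y => ?_⟩
  · exact le_trans (by gcongr; exact min_le_left _ _) (hm x)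
  · exact le_trans (by gcongr; exact min_le_right _ _) (hc y)

theorem Coercive.eq_zero_of_re_add_eq_zero {m : E →L[ℂ] E} {c : F →L[ℂ] F}
    (hm : Coercive m) (hc : Coercive c) {f : E} {g : F}
    (h : (⟪f, m f⟫).re + (⟪g, c g⟫).re = 0) : f = 0 ∧ g = 0 := by
  obtain ⟨μ, hμ, hm, hc⟩ := hm.exists_common_const hc
  have hf := hm f
  have hg := hc g
  have hf0 : ‖f‖ ^ 2 = 0 := by nlinarith [sq_nonneg ‖f‖, sq_nonneg ‖g‖]
  have hg0 : ‖g‖ ^ 2 = 0 := by nlinarith [sq_nonneg ‖f‖, sq_nonneg ‖g‖]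
  simp_all

end Coercive

section Estimate

variable {E F : Type*} [NormedAddCommGroup E] [InnerProductSpace ℂ E]
  [NormedAddCommGroup F] [InnerProductSpace ℂ F]

theorem norm_sq_le_two_mul_opNorm_sq_add (m : E →L[ℂ] E) (u w : E) :
    ‖w‖ ^ 2 ≤ 2 * ‖m‖ ^ 2 * ‖u‖ ^ 2 + 2 * ‖m u - w‖ ^ 2 := by
  have hw : ‖w‖ ≤ ‖m‖ * ‖u‖ + ‖m u - w‖ :=
    calc ‖w‖ ≤ ‖m u‖ + ‖m u - w‖ := norm_le_norm_add_norm_sub _ _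
      _ ≤ ‖m‖ * ‖u‖ + ‖m u - w‖ := by gcongr; exact m.le_opNorm u
  nlinarith [pow_le_pow_left₀ (norm_nonneg w) hw 2, sq_nonneg (‖m‖ * ‖u‖ - ‖m u - w‖)]

theorem re_inner_block_eq {u w : E} {p q : F} (h : ⟪w, u⟫ = -⟪q, p⟫)
    (m : E →L[ℂ] E) (c : F →L[ℂ] F) :
    (⟪u, m u - w⟫).re + (⟪q, c q - p⟫).re = (⟪u, m u⟫).re + (⟪q, c q⟫).re := by
  have hre : (⟪u, w⟫).re = -(⟪q, p⟫).re := by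
    rw [← inner_conj_symm, h, map_neg, Complex.neg_re, Complex.conj_re]
  simp only [inner_sub_right, Complex.sub_re]
  linarith

theorem sq_mul_norm_sq_add_le {μ : ℝ} (hμ : 0 < μ) {m : E →L[ℂ] E} {c : F →L[ℂ] F}
    (hm : ∀ x, μ * ‖x‖ ^ 2 ≤ (⟪x, m x⟫).re) (hc : ∀ y, μ * ‖y‖ ^ 2 ≤ (⟪y, c y⟫).re)
    {u w : E} {p q : F} (h : ⟪w, u⟫ = -⟪q, p⟫) :
    μ ^ 2 * (‖u‖ ^ 2 + ‖q‖ ^ 2) ≤ ‖m u - w‖ ^ 2 + ‖c q - p‖ ^ 2 := by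
  have key : μ * (‖u‖ ^ 2 + ‖q‖ ^ 2) ≤ ‖u‖ * ‖m u - w‖ + ‖q‖ * ‖c q - p‖ :=
    calc μ * (‖u‖ ^ 2 + ‖q‖ ^ 2) ≤ (⟪u, m u⟫).re + (⟪q, c q⟫).re := by
          linarith [hm u, hc q]
      _ = (⟪u, m u - w⟫).re + (⟪q, c q - p⟫).re := (re_inner_block_eq h m c).symm
      _ ≤ ‖u‖ * ‖m u - w‖ + ‖q‖ * ‖c q - p‖ := by
          gcongr <;> exact (Complex.re_le_norm _).trans (norm_inner_le_norm _ _)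
  nlinarith [mul_le_mul_of_nonneg_left key hμ.le, sq_nonneg (μ * ‖u‖ - ‖m u - w‖),
    sq_nonneg (μ * ‖q‖ - ‖c q - p‖)]

theorem Coercive.exists_block_bound {m : E →L[ℂ] E} {c : F →L[ℂ] F}
    (hm : Coercive m) (hc : Coercive c) :
    ∃ C : ℝ, 0 ≤ C ∧ ∀ (u w : E) (p q : F), ⟪w, u⟫ = -⟪q, p⟫ →
      ‖u‖ ^ 2 + ‖p‖ ^ 2 + ‖q‖ ^ 2 + ‖w‖ ^ 2 ≤ C * (‖m u - w‖ ^ 2 + ‖c q - p‖ ^ 2) := by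
  obtain ⟨μ, hμ, hmμ, hcμ⟩ := hm.exists_common_const hc
  set K := 1 + 2 * ‖m‖ ^ 2 + 2 * ‖c‖ ^ 2
  refine ⟨K / μ ^ 2 + 2, by positivity, fun u w p q h => ?_⟩
  have huq : ‖u‖ ^ 2 + ‖q‖ ^ 2 ≤ (‖m u - w‖ ^ 2 + ‖c q - p‖ ^ 2) / μ ^ 2 := by
    rw [le_div_iff₀ (by positivity)]
    linarith [sq_mul_norm_sq_add_le hμ hmμ hcμ h]
  have hK : K * (‖u‖ ^ 2 + ‖q‖ ^ 2) ≤ K * ((‖m u - w‖ ^ 2 + ‖c q - p‖ ^ 2) / μ ^ 2) := by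
    gcongr
  have hw := norm_sq_le_two_mul_opNorm_sq_add m u w
  have hp := norm_sq_le_two_mul_opNorm_sq_add c q p
  rw [add_mul, div_mul_eq_mul_div, mul_div_assoc]
  nlinarith [mul_nonneg (sq_nonneg ‖m‖) (sq_nonneg ‖q‖), mul_nonneg (sq_nonneg ‖c‖) (sq_nonneg ‖u‖)]

end Estimate

section BlockOperator

variable {E F : Type*} [NormedAddCommGroup E] [InnerProductSpace ℂ E]
  [NormedAddCommGroup F] [InnerProductSpace ℂ F]
  {A : Submodule ℂ (E × F)} {B : Submodule ℂ (F × E)} {m : E →L[ℂ] E} {c : F →L[ℂ] F}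

/-- If `A` is the graph of an operator `T`, then `B` is the graph of `-T*`. -/
def NegAdjointGraph (A : Submodule ℂ (E × F)) (B : Submodule ℂ (F × E)) : Prop :=
  ∀ q w, (q, w) ∈ B ↔ ∀ u p, (u, p) ∈ A → ⟪w, u⟫ = -⟪q, p⟫

theorem NegAdjointGraph.inner_eq (hAB : NegAdjointGraph A B) {u : E} {p : F} {q : F} {w : E}
    (hup : (u, p) ∈ A) (hqw : (q, w) ∈ B) : ⟪w, u⟫ = -⟪q, p⟫ :=
  (hAB q w).1 hqw u p hup

theorem NegAdjointGraph.isClosed (hAB : NegAdjointGraph A B) : IsClosed (B : Set (F × E)) := by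
  have hB : (B : Set (F × E)) = ⋂ z ∈ A, {x : F × E | ⟪x.2, z.1⟫ = -⟪x.1, z.2⟫} := by
    ext ⟨q, w⟩
    simp [hAB q w]
  rw [hB]
  exact isClosed_biInter fun z _ => isClosed_eq (by fun_prop) (by fun_prop)

variable (A B m c) in
/-- The target carries the `L²` product norm, which makes it a Hilbert space. -/
def blockOp : A.prod B →L[ℂ] WithLp 2 (E × F) :=
  (WithLp.prodContinuousLinearEquiv 2 ℂ E F).symm.toContinuousLinearMap ∘L
    ((m ∘L .fst ℂ E F ∘L .fst ℂ (E × F) (F × E) - .snd ℂ F E ∘L .snd ℂ (E × F) (F × E)).prod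
      (c ∘L .fst ℂ F E ∘L .snd ℂ (E × F) (F × E) - .snd ℂ E F ∘L .fst ℂ (E × F) (F × E))) ∘L
    (A.prod B).subtypeL

theorem blockOp_apply (k : A.prod B) :
    blockOp A B m c k = WithLp.toLp 2 (m k.1.1.1 - k.1.2.2, c k.1.2.1 - k.1.1.2) :=
  rfl

theorem NegAdjointGraph.exists_block_bound (hAB : NegAdjointGraph A B) (hm : Coercive m)
    (hc : Coercive c) :
    ∃ C : ℝ, ∀ f g u p q w, (u, p) ∈ A → (q, w) ∈ B → m u - w = f → c q - p = g →
      ‖u‖ ^ 2 + ‖p‖ ^ 2 + ‖q‖ ^ 2 + ‖w‖ ^ 2 ≤ C * (‖f‖ ^ 2 + ‖g‖ ^ 2) := by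
  obtain ⟨C, -, hC⟩ := hm.exists_block_bound hc
  exact ⟨C, fun f g u p q w hup hqw hf hg => hf ▸ hg ▸ hC u w p q (hAB.inner_eq hup hqw)⟩

theorem antilipschitz_blockOp (hAB : NegAdjointGraph A B) (hm : Coercive m) (hc : Coercive c) :
    ∃ K, AntilipschitzWith K (blockOp A B m c) := by
  obtain ⟨C, hC, hbound⟩ := hm.exists_block_bound hc
  refine ⟨(√C).toNNReal, (blockOp A B m c).antilipschitz_of_bound fun k => ?_⟩
  obtain ⟨⟨⟨u, p⟩, q, w⟩, hk⟩ := k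
  obtain ⟨hup, hqw⟩ := Submodule.mem_prod.1 hk
  have hsum := hbound u w p q (hAB.inner_eq hup hqw)
  have hT : ‖blockOp A B m c ⟨_, hk⟩‖ ^ 2 = ‖m u - w‖ ^ 2 + ‖c q - p‖ ^ 2 :=
    WithLp.prod_norm_sq_eq_of_L2 _
  rw [Real.coe_toNNReal _ (Real.sqrt_nonneg _), ← Real.sqrt_sq (norm_nonneg (blockOp A B m c _)),
    ← Real.sqrt_mul hC, hT]
  have hle : ∀ x : ℝ, x ^ 2 ≤ C * (‖m u - w‖ ^ 2 + ‖c q - p‖ ^ 2) →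
      x ≤ √(C * (‖m u - w‖ ^ 2 + ‖c q - p‖ ^ 2)) :=
    fun x hx => (le_abs_self x).trans (Real.abs_le_sqrt hx)
  show ‖(((u, p), q, w) : (E × F) × (F × E))‖ ≤ _
  simp only [Prod.norm_def, max_le_iff]
  refine ⟨⟨hle _ ?_, hle _ ?_⟩, hle _ ?_, hle _ ?_⟩ <;>
    nlinarith [sq_nonneg ‖u‖, sq_nonneg ‖p‖, sq_nonneg ‖q‖, sq_nonneg ‖w‖]

variable [CompleteSpace E]

/-- `h₁` says that `(-g, m† f) ∈ B`; testing `h₂` with it gives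
`Re ⟪f, m f⟫ + Re ⟪g, c g⟫ = 0`. -/
theorem NegAdjointGraph.eq_zero_of_forall_inner_eq (hAB : NegAdjointGraph A B)
    (hm : Coercive m) (hc : Coercive c) {f : E} {g : F}
    (h₁ : ∀ u p, (u, p) ∈ A → ⟪f, m u⟫ = ⟪g, p⟫)
    (h₂ : ∀ q w, (q, w) ∈ B → ⟪f, w⟫ = ⟪g, c q⟫) : f = 0 ∧ g = 0 := by
  have hB : (-g, m.adjoint f) ∈ B := (hAB _ _).2 fun u p hup => by
    rw [ContinuousLinearMap.adjoint_inner_left, h₁ u p hup, inner_neg_left, neg_neg]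
  have hre : (⟪f, m.adjoint f⟫).re = (⟪f, m f⟫).re := by
    rw [← inner_conj_symm, ContinuousLinearMap.adjoint_inner_left, Complex.conj_re]
  refine hm.eq_zero_of_re_add_eq_zero hc ?_
  rw [← hre, h₂ _ _ hB, map_neg, inner_neg_right, Complex.neg_re, neg_add_cancel]

theorem orthogonal_range_blockOp (hAB : NegAdjointGraph A B) (hm : Coercive m)
    (hc : Coercive c) : (LinearMap.range (blockOp A B m c).toLinearMap)ᗮ = ⊥ := by
  refine (Submodule.eq_bot_iff _).2 fun x hx => ?_
  have hx' : ∀ k, ⟪x, blockOp A B m c k⟫ = 0 := fun k =>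
    (Submodule.mem_orthogonal' _ _).1 hx _ (LinearMap.mem_range_self _ k)
  obtain ⟨⟨f, g⟩⟩ := x
  have h₁ : ∀ u p, (u, p) ∈ A → ⟪f, m u⟫ = ⟪g, p⟫ := fun u p hup => by
    have := hx' ⟨((u, p), 0), Submodule.mem_prod.2 ⟨hup, B.zero_mem⟩⟩
    simp only [blockOp_apply, WithLp.prod_inner_apply, Prod.fst_zero, Prod.snd_zero, map_zero,
      sub_zero, zero_sub, inner_neg_right] at this
    linear_combination this
  have h₂ : ∀ q w, (q, w) ∈ B → ⟪f, w⟫ = ⟪g, c q⟫ := fun q w hqw => by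
    have := hx' ⟨(0, (q, w)), Submodule.mem_prod.2 ⟨A.zero_mem, hqw⟩⟩
    simp only [blockOp_apply, WithLp.prod_inner_apply, Prod.fst_zero, Prod.snd_zero, map_zero,
      sub_zero, zero_sub, inner_neg_right] at this
    linear_combination -this
  obtain ⟨rfl, rfl⟩ := hAB.eq_zero_of_forall_inner_eq hm hc h₁ h₂
  rfl

variable [CompleteSpace F]

theorem blockOp_bijective (hA : IsClosed (A : Set (E × F))) (hAB : NegAdjointGraph A B)
    (hm : Coercive m) (hc : Coercive c) : Function.Bijective (blockOp A B m c) := by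
  obtain ⟨K, hK⟩ := antilipschitz_blockOp hAB hm hc
  have hAB_closed : IsClosed (A.prod B : Set ((E × F) × (F × E))) := by
    rw [Submodule.prod_coe]
    exact hA.prod hAB.isClosed
  have := hAB_closed.completeSpace_coe
  have hrange : IsClosed (LinearMap.range (blockOp A B m c).toLinearMap :
      Set (WithLp 2 (E × F))) :=
    hK.isClosed_range (blockOp A B m c).uniformContinuous
  have := hrange.completeSpace_coe
  exact ⟨hK.injective, LinearMap.range_eq_top.1 <|
    Submodule.orthogonal_eq_bot_iff.1 (orthogonal_range_blockOp hAB hm hc)⟩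

theorem NegAdjointGraph.existsUnique_block_solution (hA : IsClosed (A : Set (E × F)))
    (hAB : NegAdjointGraph A B) (hm : Coercive m) (hc : Coercive c) (f : E) (g : F) :
    ∃! z : (E × F) × (F × E), z.1 ∈ A ∧ z.2 ∈ B ∧ m z.1.1 - z.2.2 = f ∧ c z.2.1 - z.1.2 = g := by
  have hsol : ∀ z (hz : z ∈ A.prod B), blockOp A B m c ⟨z, hz⟩ = WithLp.toLp 2 (f, g) ↔
      m z.1.1 - z.2.2 = f ∧ c z.2.1 - z.1.2 = g := by
    simp [blockOp_apply]
  obtain ⟨hinj, hsurj⟩ := blockOp_bijective hA hAB hm hc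
  obtain ⟨⟨z, hz⟩, hTz⟩ := hsurj (WithLp.toLp 2 (f, g))
  refine ⟨z, ⟨hz.1, hz.2, (hsol z hz).1 hTz⟩, fun z' ⟨h₁, h₂, h₃⟩ => ?_⟩
  exact congrArg Subtype.val (hinj (((hsol z' ⟨h₁, h₂⟩).2 h₃).trans hTz.symm))

end BlockOperator

variable {H₀ H₁ HS : Type*}
  [NormedAddCommGroup H₀] [InnerProductSpace ℂ H₀] [CompleteSpace H₀]
  [NormedAddCommGroup H₁] [InnerProductSpace ℂ H₁] [CompleteSpace H₁]

theorem statement4_general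
    (G Gi : H₀ →ₗ.[ℂ] H₁) (D Di : H₁ →ₗ.[ℂ] H₀)
    (hGclosed : IsClosed (G.graph : Set (H₀ × H₁)))
    (hDclosed : IsClosed (D.graph : Set (H₁ × H₀)))
    (hGi : ∀ u w, (u, w) ∈ Gi.graph ↔ ∀ q s, (q, s) ∈ D.graph → ⟪w, q⟫ = -⟪u, s⟫)
    (hDi : ∀ q w, (q, w) ∈ Di.graph ↔ ∀ u p, (u, p) ∈ G.graph → ⟪w, u⟫ = -⟪q, p⟫)
    (a : H₁ →L[ℂ] H₁) (m : H₀ →L[ℂ] H₀)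
    (ha : Coercive a) (hm : Coercive m)
    (ainv : H₁ →L[ℂ] H₁) (hainv : ∀ x, ainv (a x) = x ∧ a (ainv x) = x) :
    -- (i) the block operator (m, -D̊; -G, a⁻¹) on dom G × dom D̊ is bijective
    (∀ (f : H₀) (g : H₁), ∃! z : (H₀ × H₁) × (H₁ × H₀),
      z.1 ∈ G.graph ∧ z.2 ∈ Di.graph ∧
      m z.1.1 - z.2.2 = f ∧ ainv z.2.1 - z.1.2 = g) ∧
    -- (i) the block operator (m, -D; -G̊, a⁻¹) on dom G̊ × dom D is bijective
    (∀ (f : H₀) (g : H₁), ∃! z : (H₀ × H₁) × (H₁ × H₀),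
      z.1 ∈ Gi.graph ∧ z.2 ∈ D.graph ∧
      m z.1.1 - z.2.2 = f ∧ ainv z.2.1 - z.1.2 = g) ∧
    -- (ii) the inverse of the first is bounded into dom G × dom D̊ (graph norms)
    (∃ C : ℝ, ∀ f g u p q w, (u, p) ∈ G.graph → (q, w) ∈ Di.graph →
      m u - w = f → ainv q - p = g →
      ‖u‖ ^ 2 + ‖p‖ ^ 2 + ‖q‖ ^ 2 + ‖w‖ ^ 2 ≤ C * (‖f‖ ^ 2 + ‖g‖ ^ 2)) ∧
    -- (iii) the inverse of the second is bounded into dom G̊ × dom D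
    (∃ C : ℝ, ∀ f g u p q w, (u, p) ∈ Gi.graph → (q, w) ∈ D.graph →
      m u - w = f → ainv q - p = g →
      ‖u‖ ^ 2 + ‖p‖ ^ 2 + ‖q‖ ^ 2 + ‖w‖ ^ 2 ≤ C * (‖f‖ ^ 2 + ‖g‖ ^ 2)) := by
  have hc : Coercive ainv := ha.of_rightInverse fun x => (hainv x).2
  have hGDi : NegAdjointGraph G.graph Di.graph := hDi
  have hDGi : NegAdjointGraph D.graph Gi.graph := hGi
  obtain ⟨C₁, hC₁⟩ := hGDi.exists_block_bound hm hc
  obtain ⟨C₂, hC₂⟩ := hDGi.exists_block_bound hc hm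
  refine ⟨hGDi.existsUnique_block_solution hGclosed hm hc, fun f g => ?_, ⟨C₁, hC₁⟩,
    ⟨C₂, fun f g u p q w hup hqw hf hg => ?_⟩⟩
  · refine ((Equiv.prodComm _ _).existsUnique_congr fun z => ?_).1
      (hDGi.existsUnique_block_solution hDclosed hc hm g f)
    simp only [Equiv.prodComm_apply, Prod.fst_swap, Prod.snd_swap]
    tauto
  · linarith [hC₂ g f q w u p hqw hup hg hf]

/-- Lemma 2.11: invertibility and boundedness of the inverses of the block
operators `(m, -D̊; -G, a⁻¹)` on `dom G × dom D̊` and `(m, -D; -G̊, a⁻¹)` on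
`dom G̊ × dom D`. -/
theorem statement4
    (G Gi : H₀ →ₗ.[ℂ] H₁) (D Di : H₁ →ₗ.[ℂ] H₀)
    (hGdense : Dense (G.domain : Set H₀)) (hDdense : Dense (D.domain : Set H₁))
    (hGclosed : IsClosed (G.graph : Set (H₀ × H₁)))
    (hDclosed : IsClosed (D.graph : Set (H₁ × H₀)))
    (hGi : ∀ u w, (u, w) ∈ Gi.graph ↔ ∀ q s, (q, s) ∈ D.graph → ⟪w, q⟫ = -⟪u, s⟫)
    (hDi : ∀ q w, (q, w) ∈ Di.graph ↔ ∀ u p, (u, p) ∈ G.graph → ⟪w, u⟫ = -⟪q, p⟫)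
    (hGiG : Gi.graph ≤ G.graph) (hDiD : Di.graph ≤ D.graph)
    (a : H₁ →L[ℂ] H₁) (m : H₀ →L[ℂ] H₀)
    (ha : Coercive a) (hm : Coercive m)
    (ainv : H₁ →L[ℂ] H₁) (hainv : ∀ x, ainv (a x) = x ∧ a (ainv x) = x) :
    -- (i) the block operator (m, -D̊; -G, a⁻¹) on dom G × dom D̊ is bijective
    (∀ (f : H₀) (g : H₁), ∃! z : (H₀ × H₁) × (H₁ × H₀),
      z.1 ∈ G.graph ∧ z.2 ∈ Di.graph ∧
      m z.1.1 - z.2.2 = f ∧ ainv z.2.1 - z.1.2 = g) ∧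
    -- (i) the block operator (m, -D; -G̊, a⁻¹) on dom G̊ × dom D is bijective
    (∀ (f : H₀) (g : H₁), ∃! z : (H₀ × H₁) × (H₁ × H₀),
      z.1 ∈ Gi.graph ∧ z.2 ∈ D.graph ∧
      m z.1.1 - z.2.2 = f ∧ ainv z.2.1 - z.1.2 = g) ∧
    -- (ii) the inverse of the first is bounded into dom G × dom D̊ (graph norms)
    (∃ C : ℝ, ∀ f g u p q w, (u, p) ∈ G.graph → (q, w) ∈ Di.graph →
      m u - w = f → ainv q - p = g →
      ‖u‖ ^ 2 + ‖p‖ ^ 2 + ‖q‖ ^ 2 + ‖w‖ ^ 2 ≤ C * (‖f‖ ^ 2 + ‖g‖ ^ 2)) ∧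
    -- (iii) the inverse of the second is bounded into dom G̊ × dom D
    (∃ C : ℝ, ∀ f g u p q w, (u, p) ∈ Gi.graph → (q, w) ∈ D.graph →
      m u - w = f → ainv q - p = g →
      ‖u‖ ^ 2 + ‖p‖ ^ 2 + ‖q‖ ^ 2 + ‖w‖ ^ 2 ≤ C * (‖f‖ ^ 2 + ‖g‖ ^ 2)) :=
  statement4_general G Gi D Di hGclosed hDclosed hGi hDi a m ha hm ainv hainv

end DtNPaper
end
end

section
/- Let a be a coercive bounded operator on H₁ and m a coercive bounded operator on H₀. Let u₀ ∈ BD(G). Then there exists a unique u ∈ dom(G) such that aGu ∈ dom(D), mu − DaGu = 0 and u − u₀ ∈ dom(G̊). -/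
/-!
Lax–Milgram in the Hilbert sum `H₀ ⊕ H₁`. Let `W = {(s, q) | (q, s) ∈ graph D}`, a closed
subspace since `D` is closed. The condition `G̊ = -D*` says exactly that `graph G̊ = Wᗮ`, so
`(graph G̊)ᗮ = W`. Writing `z = (u, G u)` and `z₀ = (u₀, G u₀)`, the Dirichlet problem becomes:
find `z ∈ z₀ + graph G̊` with `(m × a) z ∈ (graph G̊)ᗮ`. The compression of the coercive
operator `m × a` to `graph G̊` is coercive, hence surjective, which gives a solution; the
difference `x` of two solutions satisfies `Re ⟪x, (m × a) x⟫ = 0`, so it vanishes.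
-/

open Filter Topology

noncomputable section

namespace DtNPaper

local notation "⟪" x ", " y "⟫" => (inner ℂ x y : ℂ)

variable {H₀ H₁ HS : Type*}
  [NormedAddCommGroup H₀] [InnerProductSpace ℂ H₀] [CompleteSpace H₀]
  [NormedAddCommGroup H₁] [InnerProductSpace ℂ H₁] [CompleteSpace H₁]

section Coercive

variable {E : Type*} [NormedAddCommGroup E] [InnerProductSpace ℂ E]

lemma Coercive.eq_zero_of_inner_re_nonpos {A : E →L[ℂ] E} (hA : Coercive A) {x : E}
    (hx : (⟪x, A x⟫).re ≤ 0) : x = 0 := by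
  obtain ⟨μ, hμ, hA⟩ := hA
  have : ‖x‖ ^ 2 ≤ 0 := by nlinarith [hA x]
  simpa using this

lemma Coercive.eq_zero_of_mem_of_mem_orthogonal {A : E →L[ℂ] E} (hA : Coercive A)
    {K : Submodule ℂ E} {x : E} (hx : x ∈ K) (hAx : A x ∈ Kᗮ) : x = 0 := by
  have h : ⟪A x, x⟫ = 0 := (Submodule.mem_orthogonal' _ _).mp hAx x hx
  refine hA.eq_zero_of_inner_re_nonpos ?_
  rw [← inner_conj_symm, h, map_zero, Complex.zero_re]

lemma Coercive.antilipschitz {A : E →L[ℂ] E} (hA : Coercive A) :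
    ∃ C, AntilipschitzWith C A := by
  obtain ⟨μ, hμ, hAμ⟩ := hA
  refine ⟨⟨μ⁻¹, by positivity⟩, A.antilipschitz_of_bound fun x => ?_⟩
  show ‖x‖ ≤ μ⁻¹ * ‖A x‖
  rw [inv_mul_eq_div, le_div_iff₀ hμ, mul_comm]
  rcases eq_or_ne x 0 with rfl | hx
  · simp
  have : μ * ‖x‖ ^ 2 ≤ ‖x‖ * ‖A x‖ :=
    (hAμ x).trans ((Complex.re_le_norm _).trans (norm_inner_le_norm x (A x)))
  nlinarith [norm_pos_iff.mpr hx]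

lemma Coercive.surjective [CompleteSpace E] {A : E →L[ℂ] E} (hA : Coercive A) :
    Function.Surjective A := by
  obtain ⟨C, hC⟩ := hA.antilipschitz
  set R := LinearMap.range (A : E →ₗ[ℂ] E)
  have hR : IsClosed (R : Set E) := by
    simpa [R, LinearMap.coe_range] using hC.isClosed_range A.uniformContinuous
  have : CompleteSpace R := hR.completeSpace_coe
  have hRperp : Rᗮ = ⊥ := by
    refine (Submodule.eq_bot_iff _).mpr fun y hy => hA.eq_zero_of_inner_re_nonpos (le_of_eq ?_)
    rw [← inner_conj_symm, (Submodule.mem_orthogonal _ y).mp hy (A y) ⟨y, rfl⟩]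
    simp
  exact LinearMap.range_eq_top.mp (Submodule.orthogonal_eq_bot_iff.mp hRperp)

lemma Coercive.compress {A : E →L[ℂ] E} (hA : Coercive A) (K : Submodule ℂ E)
    [K.HasOrthogonalProjection] :
    Coercive (K.orthogonalProjectionOnto ∘L A ∘L K.subtypeL) := by
  obtain ⟨μ, hμ, hAμ⟩ := hA
  refine ⟨μ, hμ, fun v => ?_⟩
  simpa using hAμ v

lemma Coercive.existsUnique_sub_mem_and_mem_orthogonal [CompleteSpace E] {A : E →L[ℂ] E}
    (hA : Coercive A) (K : Submodule ℂ E) [CompleteSpace K] (z₀ : E) :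
    ∃! z : E, z - z₀ ∈ K ∧ A z ∈ Kᗮ := by
  obtain ⟨v, hv⟩ := (hA.compress K).surjective (-K.orthogonalProjectionOnto (A z₀))
  refine existsUnique_of_exists_of_unique ⟨z₀ + v, by simp, ?_⟩ fun z z' ⟨hz, hAz⟩ ⟨hz', hAz'⟩ => ?_
  · rw [← Submodule.orthogonalProjectionOnto_eq_zero_iff, map_add, map_add]
    simpa [eq_neg_iff_add_eq_zero, add_comm] using hv
  · refine sub_eq_zero.mp (hA.eq_zero_of_mem_of_mem_orthogonal (K := K) ?_ ?_)
    · simpa using K.sub_mem hz hz'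
    · simpa using Kᗮ.sub_mem hAz hAz'

end Coercive

section HilbertSum

variable {E F : Type*} [NormedAddCommGroup E] [InnerProductSpace ℂ E]
  [NormedAddCommGroup F] [InnerProductSpace ℂ F]

def prodMapL2 (m : E →L[ℂ] E) (a : F →L[ℂ] F) : WithLp 2 (E × F) →L[ℂ] WithLp 2 (E × F) :=
  (WithLp.prodContinuousLinearEquiv 2 ℂ E F).symm.toContinuousLinearMap ∘L m.prodMap a ∘L
    (WithLp.prodContinuousLinearEquiv 2 ℂ E F).toContinuousLinearMap

lemma coercive_prodMapL2 {m : E →L[ℂ] E} {a : F →L[ℂ] F} (hm : Coercive m) (ha : Coercive a) :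
    Coercive (prodMapL2 m a) := by
  obtain ⟨μm, hμm, hm⟩ := hm
  obtain ⟨μa, hμa, ha⟩ := ha
  refine ⟨min μm μa, lt_min hμm hμa, fun z => ?_⟩
  have hnorm : ‖z‖ ^ 2 = ‖z.fst‖ ^ 2 + ‖z.snd‖ ^ 2 := WithLp.prod_norm_sq_eq_of_L2 z
  have hinner : ⟪z, prodMapL2 m a z⟫ = ⟪z.fst, m z.fst⟫ + ⟪z.snd, a z.snd⟫ := rfl
  rw [hnorm, hinner, Complex.add_re]
  nlinarith [hm z.fst, ha z.snd, min_le_left μm μa, min_le_right μm μa,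
    sq_nonneg ‖z.fst‖, sq_nonneg ‖z.snd‖]

def swappedGraph (D : F →ₗ.[ℂ] E) : Submodule ℂ (WithLp 2 (E × F)) :=
  D.graph.comap ((LinearEquiv.prodComm ℂ E F).toLinearMap ∘ₗ
    (WithLp.linearEquiv 2 ℂ (E × F)).toLinearMap)

lemma mem_swappedGraph {D : F →ₗ.[ℂ] E} {z : WithLp 2 (E × F)} :
    z ∈ swappedGraph D ↔ (z.snd, z.fst) ∈ D.graph :=
  Iff.rfl

lemma isClosed_swappedGraph {D : F →ₗ.[ℂ] E} (hD : IsClosed (D.graph : Set (F × E))) :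
    IsClosed (swappedGraph D : Set (WithLp 2 (E × F))) :=
  hD.preimage (continuous_swap.comp (WithLp.prodContinuousLinearEquiv 2 ℂ E F).continuous)

lemma mem_orthogonal_swappedGraph_iff {T : E →ₗ.[ℂ] F} {D : F →ₗ.[ℂ] E}
    (hT : ∀ u w, (u, w) ∈ T.graph ↔ ∀ q s, (q, s) ∈ D.graph → ⟪w, q⟫ = -⟪u, s⟫)
    (z : WithLp 2 (E × F)) : z ∈ (swappedGraph D)ᗮ ↔ (z.fst, z.snd) ∈ T.graph := by
  rw [Submodule.mem_orthogonal', hT]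
  constructor
  · intro h q s hqs
    have := h (WithLp.toLp 2 (s, q)) hqs
    rw [WithLp.prod_inner_apply] at this
    exact eq_neg_of_add_eq_zero_left ((add_comm _ _).trans this)
  · intro h y hy
    rw [WithLp.prod_inner_apply]
    exact (add_comm _ _).trans (add_eq_zero_iff_eq_neg.mpr (h y.snd y.fst hy))

end HilbertSum

lemma mem_graph_of_graph_le {R E F : Type*} [Ring R] [AddCommGroup E] [Module R E]
    [AddCommGroup F] [Module R F] {S T : E →ₗ.[R] F} (hST : S.graph ≤ T.graph) {x : E} {y : F}
    (hx : x ∈ S.domain) (hxy : (x, y) ∈ T.graph) : (x, y) ∈ S.graph := by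
  obtain ⟨y', hy'⟩ := LinearPMap.mem_domain_iff.mp hx
  rwa [T.mem_graph_snd_inj hxy (hST hy') rfl]

theorem statement5_general
    (G Gi : H₀ →ₗ.[ℂ] H₁) (D : H₁ →ₗ.[ℂ] H₀)
    (hDclosed : IsClosed (D.graph : Set (H₁ × H₀)))
    (hGi : ∀ u w, (u, w) ∈ Gi.graph ↔ ∀ q s, (q, s) ∈ D.graph → ⟪w, q⟫ = -⟪u, s⟫)
    (hGiG : Gi.graph ≤ G.graph)
    (a : H₁ →L[ℂ] H₁) (m : H₀ →L[ℂ] H₀)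
    (ha : Coercive a) (hm : Coercive m)
    (u₀ : H₀) (hu₀ : memBD G Gi u₀) :
    ∃! u : H₀, ∃ p : H₁, (u, p) ∈ G.graph ∧ (a p, m u) ∈ D.graph ∧
      u - u₀ ∈ Gi.domain := by
  obtain ⟨p₀, hp₀, -⟩ := hu₀
  have : CompleteSpace (swappedGraph D) := (isClosed_swappedGraph hDclosed).completeSpace_coe
  obtain ⟨z, ⟨hz, hAz⟩, huniq⟩ :=
    (coercive_prodMapL2 hm ha).existsUnique_sub_mem_and_mem_orthogonal (swappedGraph D)ᗮ
      (WithLp.toLp 2 (u₀, p₀))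
  rw [Submodule.orthogonal_orthogonal] at hAz huniq
  rw [mem_orthogonal_swappedGraph_iff hGi] at hz
  refine ⟨z.fst, ⟨z.snd, ?_, mem_swappedGraph.mp hAz, ?_⟩, ?_⟩
  · simpa using add_mem (hGiG hz) hp₀
  · simpa using LinearPMap.mem_domain_of_mem_graph hz
  · rintro u ⟨p, hup, hD, hdom⟩
    have hGi_sub : (u - u₀, p - p₀) ∈ Gi.graph :=
      mem_graph_of_graph_le hGiG hdom (by simpa using sub_mem hup hp₀)
    exact congrArg WithLp.fst <| huniq (WithLp.toLp 2 (u, p))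
      ⟨(mem_orthogonal_swappedGraph_iff hGi _).mpr hGi_sub, mem_swappedGraph.mpr hD⟩

/-- Proposition 2.9: unique solvability of the Dirichlet problem: for
`u₀ ∈ BD(G)` there is a unique `u ∈ dom (D a G)` with `m u - D a G u = 0` and
`u - u₀ ∈ dom G̊`. -/
theorem statement5
    (G Gi : H₀ →ₗ.[ℂ] H₁) (D Di : H₁ →ₗ.[ℂ] H₀)
    (hGdense : Dense (G.domain : Set H₀)) (hDdense : Dense (D.domain : Set H₁))
    (hGclosed : IsClosed (G.graph : Set (H₀ × H₁)))
    (hDclosed : IsClosed (D.graph : Set (H₁ × H₀)))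
    (hGi : ∀ u w, (u, w) ∈ Gi.graph ↔ ∀ q s, (q, s) ∈ D.graph → ⟪w, q⟫ = -⟪u, s⟫)
    (hDi : ∀ q w, (q, w) ∈ Di.graph ↔ ∀ u p, (u, p) ∈ G.graph → ⟪w, u⟫ = -⟪q, p⟫)
    (hGiG : Gi.graph ≤ G.graph) (hDiD : Di.graph ≤ D.graph)
    (a : H₁ →L[ℂ] H₁) (m : H₀ →L[ℂ] H₀)
    (ha : Coercive a) (hm : Coercive m)
    (u₀ : H₀) (hu₀ : memBD G Gi u₀) :
    ∃! u : H₀, ∃ p : H₁, (u, p) ∈ G.graph ∧ (a p, m u) ∈ D.graph ∧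
      u - u₀ ∈ Gi.domain :=
  statement5_general G Gi D hDclosed hGi hGiG a m ha hm u₀ hu₀

end DtNPaper
end
end

section
/- Let a be a coercive bounded operator on H₁ and m a coercive bounded operator on H₀. Let q₀ ∈ BD(D). Then there exists a unique u ∈ dom(G) such that aGu ∈ dom(D), mu − DaGu = 0 and aGu − q₀ ∈ dom(D̊). -/
/-!
Let `V` be the graph of `G`, a closed subspace of the Hilbert sum `H₀ ⊕ H₁`, and pick `r₀` with
`(q₀, r₀)` in the graph of `D`. Since `D̊ = -G*`, for `(u, p) ∈ V` the two conditions
`(a p, m u) ∈ graph D` and `a p - q₀ ∈ dom D̊` together say exactly that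
`(m u, a p) - (r₀, q₀)` is orthogonal to `V`. The operator `m ⊕ a` is coercive, so this
Galerkin problem on `V` has exactly one solution (Lax–Milgram).
-/

open Filter Topology

noncomputable section

namespace DtNPaper

local notation "⟪" x ", " y "⟫" => (inner ℂ x y : ℂ)

variable {H₀ H₁ HS : Type*}
  [NormedAddCommGroup H₀] [InnerProductSpace ℂ H₀] [CompleteSpace H₀]
  [NormedAddCommGroup H₁] [InnerProductSpace ℂ H₁] [CompleteSpace H₁]

open scoped InnerProductSpace

section Coercive

variable {E : Type*} [NormedAddCommGroup E] [InnerProductSpace ℂ E] {T : E →L[ℂ] E}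

theorem Coercive.eq_zero_of_inner_eq_zero (hT : Coercive T) {z : E} (hz : ⟪z, T z⟫ = 0) :
    z = 0 := by
  obtain ⟨μ, hμ, hcoer⟩ := hT
  have h := hcoer z
  rw [hz, Complex.zero_re] at h
  exact norm_eq_zero.mp (pow_eq_zero_iff two_ne_zero |>.mp
    (le_antisymm (nonpos_of_mul_nonpos_right h hμ) (sq_nonneg _)))

theorem Coercive.exists_mul_norm_le (hT : Coercive T) : ∃ μ > 0, ∀ z, μ * ‖z‖ ≤ ‖T z‖ := by
  obtain ⟨μ, hμ, hcoer⟩ := hT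
  refine ⟨μ, hμ, fun z => ?_⟩
  rcases (norm_nonneg z).eq_or_lt with hz | hz
  · rw [← hz, mul_zero]
    exact norm_nonneg _
  have : μ * ‖z‖ ^ 2 ≤ ‖z‖ * ‖T z‖ :=
    (hcoer z).trans ((Complex.re_le_norm _).trans (norm_inner_le_norm _ _))
  nlinarith

theorem Coercive.surjective_s6 [CompleteSpace E] (hT : Coercive T) : Function.Surjective T := by
  obtain ⟨μ, hμ, hbound⟩ := hT.exists_mul_norm_le
  have hanti : AntilipschitzWith (Real.toNNReal μ⁻¹) T := T.antilipschitz_of_bound fun z => by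
    rw [Real.coe_toNNReal _ (inv_nonneg.mpr hμ.le), ← div_eq_inv_mul, le_div_iff₀' hμ]
    exact hbound z
  have hclosed : IsClosed (LinearMap.range T.toLinearMap : Set E) :=
    hanti.isClosed_range T.uniformContinuous
  have horth : (LinearMap.range T.toLinearMap)ᗮ = ⊥ :=
    (Submodule.eq_bot_iff _).mpr fun y hy => hT.eq_zero_of_inner_eq_zero <|
      Submodule.inner_left_of_mem_orthogonal (LinearMap.mem_range_self _ y) hy
  rw [← Submodule.topologicalClosure_eq_top_iff, hclosed.submodule_topologicalClosure_eq] at horth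
  exact LinearMap.range_eq_top.mp horth

theorem Coercive.existsUnique_mem_sub_mem_orthogonal (hT : Coercive T) (K : Submodule ℂ E)
    [CompleteSpace K] (y : E) : ∃! z, z ∈ K ∧ T z - y ∈ Kᗮ := by
  have hPT : Coercive (K.orthogonalProjectionOnto ∘L T ∘L K.subtypeL) := by
    obtain ⟨μ, hμ, hcoer⟩ := hT
    refine ⟨μ, hμ, fun z => ?_⟩
    simpa only [ContinuousLinearMap.comp_apply, Submodule.subtypeL_apply,
      Submodule.inner_orthogonalProjectionOnto_eq_of_mem_left, Submodule.coe_norm] using hcoer z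
  obtain ⟨z, hz⟩ := hPT.surjective_s6 (K.orthogonalProjectionOnto y)
  have hz_mem : T z - y ∈ Kᗮ := by
    rw [← Submodule.orthogonalProjectionOnto_eq_zero_iff, map_sub, sub_eq_zero]
    exact hz
  refine ⟨z, ⟨z.2, hz_mem⟩, fun z' ⟨hz'K, hz'⟩ => ?_⟩
  have hdiff : T (z' - z) ∈ Kᗮ := by
    simpa only [map_sub, sub_sub_sub_cancel_right] using Kᗮ.sub_mem hz' hz_mem
  exact sub_eq_zero.mp <| hT.eq_zero_of_inner_eq_zero <|
    Submodule.inner_right_of_mem_orthogonal (K.sub_mem hz'K z.2) hdiff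

end Coercive

theorem LinearPMap.mem_graph_and_sub_mem_domain_iff {R E F : Type*} [Ring R] [AddCommGroup E]
    [Module R E] [AddCommGroup F] [Module R F] {S T : E →ₗ.[R] F} (hST : S.graph ≤ T.graph)
    {x₀ x : E} {y₀ y : F} (h₀ : (x₀, y₀) ∈ T.graph) :
    (x, y) ∈ T.graph ∧ x - x₀ ∈ S.domain ↔ (x - x₀, y - y₀) ∈ S.graph := by
  constructor
  · rintro ⟨h, hdom⟩
    obtain ⟨y', hy'⟩ := LinearPMap.mem_domain_iff.mp hdom
    have hsub : (x - x₀, y - y₀) ∈ T.graph := T.graph.sub_mem h h₀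
    rwa [T.mem_graph_snd_inj (hST hy') hsub rfl] at hy'
  · intro h
    refine ⟨?_, LinearPMap.mem_domain_of_mem_graph h⟩
    simpa using T.graph.add_mem (hST h) h₀

section GraphL2

variable {𝕜 E F : Type*} [RCLike 𝕜] [NormedAddCommGroup E] [InnerProductSpace 𝕜 E]
  [NormedAddCommGroup F] [InnerProductSpace 𝕜 F]

def graphL2 (T : E →ₗ.[𝕜] F) : Submodule 𝕜 (WithLp 2 (E × F)) :=
  T.graph.comap (WithLp.linearEquiv 2 𝕜 (E × F)).toLinearMap

theorem toLp_mem_graphL2 {T : E →ₗ.[𝕜] F} {x : E × F} :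
    WithLp.toLp 2 x ∈ graphL2 T ↔ x ∈ T.graph :=
  Iff.rfl

theorem isClosed_graphL2 {T : E →ₗ.[𝕜] F} (hT : IsClosed (T.graph : Set (E × F))) :
    IsClosed (graphL2 T : Set (WithLp 2 (E × F))) :=
  hT.preimage (WithLp.prodContinuousLinearEquiv 2 𝕜 E F).continuous

theorem toLp_mem_orthogonal_graphL2_iff {T : E →ₗ.[𝕜] F} {s : E} {t : F} :
    WithLp.toLp 2 (s, t) ∈ (graphL2 T)ᗮ ↔
      ∀ v w, (v, w) ∈ T.graph → ⟪s, v⟫_𝕜 + ⟪t, w⟫_𝕜 = 0 := by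
  rw [Submodule.mem_orthogonal']
  exact ⟨fun h v w hvw => h _ (toLp_mem_graphL2.mpr hvw), fun h x hx => h _ _ hx⟩

end GraphL2

section DiagL2

variable {E F : Type*} [NormedAddCommGroup E] [InnerProductSpace ℂ E]
  [NormedAddCommGroup F] [InnerProductSpace ℂ F]

def diagL2 (m : E →L[ℂ] E) (a : F →L[ℂ] F) : WithLp 2 (E × F) →L[ℂ] WithLp 2 (E × F) :=
  let e := WithLp.prodContinuousLinearEquiv 2 ℂ E F
  (e.symm : E × F →L[ℂ] WithLp 2 (E × F)) ∘L m.prodMap a ∘L (e : WithLp 2 (E × F) →L[ℂ] E × F)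

theorem diagL2_toLp (m : E →L[ℂ] E) (a : F →L[ℂ] F) (u : E) (p : F) :
    diagL2 m a (WithLp.toLp 2 (u, p)) = WithLp.toLp 2 (m u, a p) :=
  rfl

theorem Coercive.diagL2 {m : E →L[ℂ] E} {a : F →L[ℂ] F} (hm : Coercive m) (ha : Coercive a) :
    Coercive (diagL2 m a) := by
  obtain ⟨μm, hμm, hmcoer⟩ := hm
  obtain ⟨μa, hμa, hacoer⟩ := ha
  refine ⟨min μm μa, lt_min hμm hμa, fun x => ?_⟩
  have hm' := hmcoer x.fst
  have ha' := hacoer x.snd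
  rw [WithLp.prod_norm_sq_eq_of_L2]
  change _ ≤ (⟪x.fst, m x.fst⟫ + ⟪x.snd, a x.snd⟫).re
  rw [Complex.add_re]
  nlinarith [min_le_left μm μa, min_le_right μm μa, sq_nonneg ‖x.fst‖, sq_nonneg ‖x.snd‖]

end DiagL2

theorem statement6_general
    (G : H₀ →ₗ.[ℂ] H₁) (D Di : H₁ →ₗ.[ℂ] H₀)
    (hGclosed : IsClosed (G.graph : Set (H₀ × H₁)))
    (hDi : ∀ q w, (q, w) ∈ Di.graph ↔ ∀ u p, (u, p) ∈ G.graph → ⟪w, u⟫ = -⟪q, p⟫)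
    (hDiD : Di.graph ≤ D.graph)
    (a : H₁ →L[ℂ] H₁) (m : H₀ →L[ℂ] H₀)
    (ha : Coercive a) (hm : Coercive m)
    (q₀ : H₁) (hq₀ : memBD D Di q₀) :
    ∃! u : H₀, ∃ p : H₁, (u, p) ∈ G.graph ∧ (a p, m u) ∈ D.graph ∧
      a p - q₀ ∈ Di.domain := by
  obtain ⟨r₀, hq₀D, -⟩ := hq₀
  have : CompleteSpace (graphL2 G) := (isClosed_graphL2 hGclosed).completeSpace_coe
  have hsolves : ∀ u p, (a p, m u) ∈ D.graph ∧ a p - q₀ ∈ Di.domain ↔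
      diagL2 m a (WithLp.toLp 2 (u, p)) - WithLp.toLp 2 (r₀, q₀) ∈ (graphL2 G)ᗮ := by
    intro u p
    rw [LinearPMap.mem_graph_and_sub_mem_domain_iff hDiD hq₀D, hDi, diagL2_toLp,
      ← WithLp.toLp_sub, Prod.mk_sub_mk, toLp_mem_orthogonal_graphL2_iff]
    simp only [eq_neg_iff_add_eq_zero]
  obtain ⟨z, ⟨hzG, hz⟩, huniq⟩ :=
    (hm.diagL2 ha).existsUnique_mem_sub_mem_orthogonal (graphL2 G) (WithLp.toLp 2 (r₀, q₀))
  refine ⟨z.fst, ⟨z.snd, hzG, (hsolves _ _).mpr hz⟩, fun u ⟨p, hG, hsol⟩ => ?_⟩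
  rw [← huniq (WithLp.toLp 2 (u, p)) ⟨hG, (hsolves u p).mp hsol⟩]
  rfl

/-- Proposition 2.12: unique solvability of the Neumann problem: for
`q₀ ∈ BD(D)` there is a unique `u ∈ dom (D a G)` with `m u - D a G u = 0` and
`a G u - q₀ ∈ dom D̊`. -/
theorem statement6
    (G Gi : H₀ →ₗ.[ℂ] H₁) (D Di : H₁ →ₗ.[ℂ] H₀)
    (hGdense : Dense (G.domain : Set H₀)) (hDdense : Dense (D.domain : Set H₁))
    (hGclosed : IsClosed (G.graph : Set (H₀ × H₁)))
    (hDclosed : IsClosed (D.graph : Set (H₁ × H₀)))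
    (hGi : ∀ u w, (u, w) ∈ Gi.graph ↔ ∀ q s, (q, s) ∈ D.graph → ⟪w, q⟫ = -⟪u, s⟫)
    (hDi : ∀ q w, (q, w) ∈ Di.graph ↔ ∀ u p, (u, p) ∈ G.graph → ⟪w, u⟫ = -⟪q, p⟫)
    (hGiG : Gi.graph ≤ G.graph) (hDiD : Di.graph ≤ D.graph)
    (a : H₁ →L[ℂ] H₁) (m : H₀ →L[ℂ] H₀)
    (ha : Coercive a) (hm : Coercive m)
    (q₀ : H₁) (hq₀ : memBD D Di q₀) :
    ∃! u : H₀, ∃ p : H₁, (u, p) ∈ G.graph ∧ (a p, m u) ∈ D.graph ∧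
      a p - q₀ ∈ Di.domain :=
  statement6_general G D Di hGclosed hDi hDiD a m ha hm q₀ hq₀
end DtNPaper
end
end
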